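/- arXiv:math/0601711 — 2 statements merged into one kernel-verified Lean document; each statement's English description precedes it below -/
import Mathlib

section
/- Let ω be continuous, strictly increasing, concave with ω(0)=0, define φ_α for |α| ≤ k as in the paper, and for T = (P,x), T' = (P',x') ∈ 𝒫_k × ℝⁿ set d_ω(T,T') := max over |α| ≤ k of {ω(‖x−x'‖), φ_α(|D^α(P−P')(x)|), φ_α(|D^α(P−P')(x')|)}. Define δ_ω(T,T') := inf Σ_{i=0}^{m−1} d_ω(T_i, T_{i+1}) over all finite chains T₀ = T, …, T_m = T' in 𝒫_k × ℝⁿ. Then for all T, T': δ_ω(T,T') ≤ d_ω(T,T') ≤ δ_ω(eⁿ∘T, eⁿ∘T'), where λ∘(P,x) := (λP, x). -/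
open MvPolynomial

/-- Iterated partial derivative `D^α` of a multivariate polynomial. -/
noncomputable def mderiv {n : ℕ} (α : Fin n → ℕ) (P : MvPolynomial (Fin n) ℝ) :
    MvPolynomial (Fin n) ℝ :=
  (List.finRange n).foldl (fun Q i => (MvPolynomial.pderiv i)^[α i] Q) P

/-- The finite set of multi-indices `β ∈ ℕⁿ` with `|β| ≤ m`. -/
def multiIndices (n m : ℕ) : Finset (Fin n → ℕ) :=
  (Fintype.piFinset fun _ : Fin n => Finset.range (m + 1)).filter fun β => (∑ i, β i) ≤ m

lemma multiIndices_nonempty (n m : ℕ) : (multiIndices n m).Nonempty :=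
  ⟨fun _ => 0, by simp [multiIndices]⟩

/-- `ψ_m`: the inverse of `s ↦ s^m * ω s` on `[0,∞)`. -/
noncomputable def psiInv (ω : ℝ → ℝ) (m : ℕ) (t : ℝ) : ℝ :=
  Function.invFunOn (fun s => s ^ m * ω s) (Set.Ici 0) t

/-- `φ_α` for a multi-index of order `a`: `ω ∘ ψ_{k-a}` if `a < k`, identity if `a = k`. -/
noncomputable def phiOm (ω : ℝ → ℝ) (k a : ℕ) (t : ℝ) : ℝ :=
  if a < k then ω (psiInv ω (k - a) t) else t

/-- The quantity `d_ω(T,T')` on the space of `k`-jets `𝒫_k × ℝⁿ`. -/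
noncomputable def dOm (ω : ℝ → ℝ) {n : ℕ} (k : ℕ)
    (T T' : MvPolynomial (Fin n) ℝ × EuclideanSpace ℝ (Fin n)) : ℝ :=
  (multiIndices n k).sup' (multiIndices_nonempty n k) fun α =>
    max (ω ‖T.2 - T'.2‖)
      (max (phiOm ω k (∑ i, α i)
              |MvPolynomial.eval (fun i => T.2 i) (mderiv α (T.1 - T'.1))|)
           (phiOm ω k (∑ i, α i)
              |MvPolynomial.eval (fun i => T'.2 i) (mderiv α (T.1 - T'.1))|))

/-- The chain ("geodesic") metric `δ_ω` generated by `d_ω`, where chains run through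
jets whose polynomial components have degree at most `k`. -/
noncomputable def delOm (ω : ℝ → ℝ) {n : ℕ} (k : ℕ)
    (T T' : MvPolynomial (Fin n) ℝ × EuclideanSpace ℝ (Fin n)) : ℝ :=
  sInf { r | ∃ (m : ℕ) (c : ℕ → MvPolynomial (Fin n) ℝ × EuclideanSpace ℝ (Fin n)),
    c 0 = T ∧ c m = T' ∧ (∀ i ≤ m, (c i).1.totalDegree ≤ k) ∧
    r = ∑ i ∈ Finset.range m, dOm ω k (c i) (c (i + 1)) }

/-- Dilation `λ ∘ (P,x) := (λP, x)` of a jet. -/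
noncomputable def scaleJet {n : ℕ} (l : ℝ)
    (T : MvPolynomial (Fin n) ℝ × EuclideanSpace ℝ (Fin n)) :
    MvPolynomial (Fin n) ℝ × EuclideanSpace ℝ (Fin n) :=
  (l • T.1, T.2)

section OmegaFacts

variable {ω : ℝ → ℝ}

lemma omega_subadd (hconc : ConcaveOn ℝ (Set.Ici 0) ω) (h0 : ω 0 = 0)
    {a b : ℝ} (ha : 0 ≤ a) (hb : 0 ≤ b) : ω (a + b) ≤ ω a + ω b := by
  rcases eq_or_lt_of_le (add_nonneg ha hb) with h | h
  · have ha' : a = 0 := by linarith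
    have hb' : b = 0 := by linarith
    simp [ha', hb', h0]
  · have hmem : (a + b) ∈ Set.Ici (0:ℝ) := le_of_lt h
    have h1 := hconc.2 (Set.self_mem_Ici) hmem (div_nonneg hb h.le) (div_nonneg ha h.le)
      (by rw [← add_div, add_comm b a, div_self h.ne'])
    have h2 := hconc.2 (Set.self_mem_Ici) hmem (div_nonneg ha h.le) (div_nonneg hb h.le)
      (by field_simp [add_comm])
    simp only [smul_eq_mul, mul_zero, zero_add, h0] at h1 h2
    rw [div_mul_cancel₀ _ h.ne'] at h1 h2
    have hs : a / (a+b) + b / (a+b) = 1 := by field_simp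
    have hsum := add_le_add h1 h2
    rw [← add_mul, hs, one_mul] at hsum
    exact hsum

lemma omega_sum_le (hconc : ConcaveOn ℝ (Set.Ici 0) ω) (h0 : ω 0 = 0)
    (m : ℕ) (u : ℕ → ℝ) (hu : ∀ i < m, 0 ≤ u i) :
    ω (∑ i ∈ Finset.range m, u i) ≤ ∑ i ∈ Finset.range m, ω (u i) := by
  induction m with
  | zero => simp [h0]
  | succ m ih =>
    have hS : 0 ≤ ∑ i ∈ Finset.range m, u i :=
      Finset.sum_nonneg fun i hi => hu i (lt_of_lt_of_le (Finset.mem_range.1 hi) (Nat.le_succ m))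
    rw [Finset.sum_range_succ, Finset.sum_range_succ]
    calc ω (∑ i ∈ Finset.range m, u i + u m)
        ≤ ω (∑ i ∈ Finset.range m, u i) + ω (u m) :=
          omega_subadd hconc h0 hS (hu m (Nat.lt_succ_self m))
      _ ≤ (∑ i ∈ Finset.range m, ω (u i)) + ω (u m) := by
          have := ih (fun i hi => hu i (lt_trans hi (Nat.lt_succ_self m)))
          linarith

lemma omega_lt_of_not_eq (hcont : ContinuousOn ω (Set.Ici 0)) (h0 : ω 0 = 0)
    {t : ℝ} (ht : 0 ≤ t) (hne : ∀ s, 0 ≤ s → ω s ≠ t) :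
    ∀ s, 0 ≤ s → ω s < t := by
  intro s hs
  rcases lt_or_ge (ω s) t with h | h
  · exact h
  · exfalso
    have hmem : t ∈ Set.Icc (ω 0) (ω s) := ⟨by rw [h0]; exact ht, h⟩
    obtain ⟨x, hx, hωx⟩ := intermediate_value_Icc hs
      (hcont.mono (Set.Icc_subset_Ici_self)) hmem
    exact hne x hx.1 hωx

lemma fm_strictMono (hnn : ∀ t, 0 ≤ t → 0 ≤ ω t) (hmono : StrictMonoOn ω (Set.Ici 0))
    (m : ℕ) : StrictMonoOn (fun s => s ^ m * ω s) (Set.Ici 0) := by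
  intro a ha b hb hab
  simp only
  calc a ^ m * ω a ≤ b ^ m * ω a := by
        apply mul_le_mul_of_nonneg_right (pow_le_pow_left₀ ha hab.le m) (hnn a ha)
    _ < b ^ m * ω b := by
        apply mul_lt_mul_of_pos_left (hmono ha hb hab)
        exact pow_pos (lt_of_le_of_lt ha hab) m

lemma fm_exists (hnn : ∀ t, 0 ≤ t → 0 ≤ ω t) (hcont : ContinuousOn ω (Set.Ici 0))
    (hmono : StrictMonoOn ω (Set.Ici 0)) (h0 : ω 0 = 0)
    {m : ℕ} (hm : 1 ≤ m) {t : ℝ} (ht : 0 ≤ t) :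
    ∃ s, 0 ≤ s ∧ s ^ m * ω s = t := by
  have hω1 : 0 < ω 1 := by
    have := hmono Set.self_mem_Ici (Set.mem_Ici.2 zero_le_one) zero_lt_one
    simpa [h0] using this
  set S : ℝ := max 1 (t / ω 1) with hSdef
  have hS1 : (1:ℝ) ≤ S := le_max_left _ _
  have hS0 : (0:ℝ) ≤ S := by linarith
  have hωS : ω 1 ≤ ω S := by
    rcases eq_or_lt_of_le hS1 with h | h
    · rw [← h]
    · exact (hmono (Set.mem_Ici.2 zero_le_one) (Set.mem_Ici.2 hS0) h).le
  have hfS : t ≤ S ^ m * ω S := by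
    have h1 : t / ω 1 ≤ S := le_max_right _ _
    have h2 : t ≤ S * ω 1 := by
      rw [div_le_iff₀ hω1] at h1; linarith
    have h3 : S ≤ S ^ m := le_self_pow₀ hS1 (by omega)
    calc t ≤ S * ω 1 := h2
      _ ≤ S ^ m * ω S := by
          apply mul_le_mul h3 hωS hω1.le (by positivity)
  have hcf : ContinuousOn (fun s => s ^ m * ω s) (Set.Icc 0 S) := by
    apply ContinuousOn.mul
    · exact (continuousOn_id.pow m)
    · exact hcont.mono Set.Icc_subset_Ici_self
  have hmem : t ∈ Set.Icc ((fun s => s ^ m * ω s) 0) ((fun s => s ^ m * ω s) S) := by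
    constructor
    · simpa [h0] using ht
    · exact hfS
  obtain ⟨x, hx, hfx⟩ := intermediate_value_Icc hS0 hcf hmem
  exact ⟨x, hx.1, hfx⟩

lemma psiInv_spec (hnn : ∀ t, 0 ≤ t → 0 ≤ ω t) (hcont : ContinuousOn ω (Set.Ici 0))
    (hmono : StrictMonoOn ω (Set.Ici 0)) (h0 : ω 0 = 0)
    {m : ℕ} (hm : 1 ≤ m) {t : ℝ} (ht : 0 ≤ t) :
    0 ≤ psiInv ω m t ∧ (psiInv ω m t) ^ m * ω (psiInv ω m t) = t := by
  obtain ⟨s, hs0, hfs⟩ := fm_exists hnn hcont hmono h0 hm ht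
  have hex : ∃ a ∈ Set.Ici (0:ℝ), (fun s => s ^ m * ω s) a = t := ⟨s, hs0, hfs⟩
  exact ⟨Function.invFunOn_mem hex, Function.invFunOn_eq hex⟩

lemma psiInv_le (hnn : ∀ t, 0 ≤ t → 0 ≤ ω t) (hcont : ContinuousOn ω (Set.Ici 0))
    (hmono : StrictMonoOn ω (Set.Ici 0)) (h0 : ω 0 = 0)
    {m : ℕ} (hm : 1 ≤ m) {t s : ℝ} (ht : 0 ≤ t) (hs : 0 ≤ s)
    (h : t ≤ s ^ m * ω s) : psiInv ω m t ≤ s := by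
  obtain ⟨hp0, hpf⟩ := psiInv_spec hnn hcont hmono h0 hm ht
  by_contra hc
  push_neg at hc
  have := fm_strictMono hnn hmono m hs hp0 hc
  simp only at this
  linarith [hpf ▸ this]

lemma phiOm_le_omega (hnn : ∀ t, 0 ≤ t → 0 ≤ ω t) (hcont : ContinuousOn ω (Set.Ici 0))
    (hmono : StrictMonoOn ω (Set.Ici 0)) (h0 : ω 0 = 0)
    {k a : ℕ} (hak : a ≤ k) {t s : ℝ} (ht : 0 ≤ t) (hs : 0 ≤ s)
    (h : t ≤ s ^ (k - a) * ω s) : phiOm ω k a t ≤ ω s := by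
  unfold phiOm
  split_ifs with hlt
  · have hm : 1 ≤ k - a := by omega
    obtain ⟨hp0, _⟩ := psiInv_spec hnn hcont hmono h0 hm ht
    exact hmono.monotoneOn hp0 hs (psiInv_le hnn hcont hmono h0 hm ht hs h)
  · have : k - a = 0 := by omega
    simpa [this] using h

lemma le_of_phiOm_le (hnn : ∀ t, 0 ≤ t → 0 ≤ ω t) (hcont : ContinuousOn ω (Set.Ici 0))
    (hmono : StrictMonoOn ω (Set.Ici 0)) (h0 : ω 0 = 0)
    {k a : ℕ} (hak : a ≤ k) {t s : ℝ} (ht : 0 ≤ t) (hs : 0 ≤ s)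
    (h : phiOm ω k a t ≤ ω s) : t ≤ s ^ (k - a) * ω s := by
  unfold phiOm at h
  split_ifs at h with hlt
  · have hm : 1 ≤ k - a := by omega
    obtain ⟨hp0, hpf⟩ := psiInv_spec hnn hcont hmono h0 hm ht
    have hps : psiInv ω (k - a) t ≤ s := by
      by_contra hc
      push_neg at hc
      exact absurd h (not_le.2 (hmono hs hp0 hc))
    calc t = (psiInv ω (k-a) t) ^ (k-a) * ω (psiInv ω (k-a) t) := hpf.symm
      _ ≤ s ^ (k - a) * ω s := by
          rcases eq_or_lt_of_le hps with he | hl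
          · rw [he]
          · exact (fm_strictMono hnn hmono (k-a) hp0 hs hl).le
  · have hka : k - a = 0 := by omega
    simpa [hka] using h

lemma phiOm_nonneg (hnn : ∀ t, 0 ≤ t → 0 ≤ ω t) (hcont : ContinuousOn ω (Set.Ici 0))
    (hmono : StrictMonoOn ω (Set.Ici 0)) (h0 : ω 0 = 0)
    {k a : ℕ} {t : ℝ} (ht : 0 ≤ t) : 0 ≤ phiOm ω k a t := by
  unfold phiOm
  split_ifs with hlt
  · have hm : 1 ≤ k - a := by omega
    exact hnn _ (psiInv_spec hnn hcont hmono h0 hm ht).1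
  · exact ht

lemma phiOm_lt (hnn : ∀ t, 0 ≤ t → 0 ≤ ω t) (hcont : ContinuousOn ω (Set.Ici 0))
    (hmono : StrictMonoOn ω (Set.Ici 0)) (h0 : ω 0 = 0)
    {k a : ℕ} (hak : a < k) {t D : ℝ} (ht : 0 ≤ t)
    (hD : ∀ s, 0 ≤ s → ω s < D) : phiOm ω k a t < D := by
  unfold phiOm
  rw [if_pos hak]
  have hm : 1 ≤ k - a := by omega
  exact hD _ (psiInv_spec hnn hcont hmono h0 hm ht).1

end OmegaFacts

section MderivFacts

variable {n : ℕ}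

lemma iterate_pderiv_add (i : Fin n) (a : ℕ) (P Q : MvPolynomial (Fin n) ℝ) :
    (pderiv i)^[a] (P + Q) = (pderiv i)^[a] P + (pderiv i)^[a] Q := by
  induction a generalizing P Q with
  | zero => simp
  | succ a ih => simp [Function.iterate_succ_apply, map_add, ih]

lemma iterate_pderiv_smul (i : Fin n) (a : ℕ) (r : ℝ) (P : MvPolynomial (Fin n) ℝ) :
    (pderiv i)^[a] (r • P) = r • (pderiv i)^[a] P := by
  induction a generalizing P with
  | zero => simp
  | succ a ih => simp [Function.iterate_succ_apply, map_smul, ih]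

lemma mderiv_add (α : Fin n → ℕ) (P Q : MvPolynomial (Fin n) ℝ) :
    mderiv α (P + Q) = mderiv α P + mderiv α Q := by
  unfold mderiv
  generalize (List.finRange n) = l
  induction l generalizing P Q with
  | nil => simp
  | cons i l ih => simp [List.foldl_cons, iterate_pderiv_add, ih]

lemma mderiv_smul (α : Fin n → ℕ) (r : ℝ) (P : MvPolynomial (Fin n) ℝ) :
    mderiv α (r • P) = r • mderiv α P := by
  unfold mderiv
  generalize (List.finRange n) = l
  induction l generalizing P with
  | nil => simp
  | cons i l ih => simp [List.foldl_cons, iterate_pderiv_smul, ih]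

lemma mderiv_zero (α : Fin n → ℕ) : mderiv α (0 : MvPolynomial (Fin n) ℝ) = 0 := by
  have := mderiv_smul α 0 (0 : MvPolynomial (Fin n) ℝ)
  simpa using this

lemma mderiv_sub (α : Fin n → ℕ) (P Q : MvPolynomial (Fin n) ℝ) :
    mderiv α (P - Q) = mderiv α P - mderiv α Q := by
  have h : P - Q = P + (-1 : ℝ) • Q := by
    rw [neg_one_smul]; ring
  rw [h, mderiv_add, mderiv_smul, neg_one_smul]
  ring

lemma mderiv_sum {ι : Type*} (α : Fin n → ℕ) (s : Finset ι) (f : ι → MvPolynomial (Fin n) ℝ) :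
    mderiv α (∑ i ∈ s, f i) = ∑ i ∈ s, mderiv α (f i) := by
  classical
  induction s using Finset.induction with
  | empty => simp [mderiv_zero]
  | insert _ _ hx ih => rw [Finset.sum_insert hx, Finset.sum_insert hx, mderiv_add, ih]

lemma mderiv_zero_fun (P : MvPolynomial (Fin n) ℝ) : mderiv (fun _ => 0) P = P := by
  unfold mderiv
  generalize (List.finRange n) = l
  induction l generalizing P with
  | nil => simp
  | cons i l ih => simpa [List.foldl_cons] using ih P

lemma iterate_pderiv_monomial (i : Fin n) (a : ℕ) (d : Fin n →₀ ℕ) (c : ℝ) :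
    (pderiv i)^[a] (monomial d c)
      = monomial (d - Finsupp.single i a) (c * ((d i).descFactorial a : ℝ)) := by
  induction a with
  | zero => simp
  | succ a ih =>
    rw [Function.iterate_succ_apply', ih, pderiv_monomial]
    have h1 : ((d - Finsupp.single i a) - Finsupp.single i 1) = d - Finsupp.single i (a+1) := by
      ext j
      by_cases hj : j = i
      · subst hj
        simp [Finsupp.tsub_apply, Finsupp.single_eq_same, Nat.sub_sub]
      · simp [Finsupp.tsub_apply, Finsupp.single_eq_of_ne' (Ne.symm hj)]
    have hco : ((d - Finsupp.single i a) i : ℕ) = d i - a := by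
      simp [Finsupp.tsub_apply, Finsupp.single_eq_same]
    rw [h1, hco]
    refine congrArg _ ?_
    rw [Nat.descFactorial_succ]
    push_cast
    ring

lemma foldl_pderiv_monomial (α : Fin n → ℕ) (l : List (Fin n)) (hl : l.Nodup)
    (d : Fin n →₀ ℕ) (c : ℝ) :
    l.foldl (fun Q i => (pderiv i)^[α i] Q) (monomial d c)
      = monomial (d - (l.map (fun j => Finsupp.single j (α j))).sum)
          (c * ((l.map (fun j => ((d j).descFactorial (α j) : ℝ))).prod)) := by
  induction l generalizing d c with
  | nil => simp
  | cons i l ih =>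
    have hnd : l.Nodup := (List.nodup_cons.1 hl).2
    have hni : i ∉ l := (List.nodup_cons.1 hl).1
    rw [List.foldl_cons, iterate_pderiv_monomial, ih hnd]
    have hdj : ∀ j ∈ l, ((d - Finsupp.single i (α i)) j : ℕ) = d j := by
      intro j hj
      have : j ≠ i := fun h => hni (h ▸ hj)
      simp [Finsupp.tsub_apply, Finsupp.single_eq_of_ne' (Ne.symm this)]
    congr 1
    · rw [List.map_cons, List.sum_cons, tsub_tsub]
    · rw [List.map_cons, List.prod_cons]
      have : (l.map fun j => (((d - Finsupp.single i (α i)) j).descFactorial (α j) : ℝ))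
          = l.map fun j => ((d j).descFactorial (α j) : ℝ) := by
        apply List.map_congr_left
        intro j hj
        rw [hdj j hj]
      rw [this]
      ring

lemma esum_apply (g : Fin n → ℕ) (i : Fin n) :
    (∑ j, Finsupp.single j (g j)) i = g i := by
  rw [Finset.sum_apply']
  rw [Finset.sum_eq_single i]
  · simp
  · intro j _ hj
    exact Finsupp.single_eq_of_ne' hj
  · intro h
    exact absurd (Finset.mem_univ i) h

lemma mderiv_monomial (α : Fin n → ℕ) (d : Fin n →₀ ℕ) (c : ℝ) :
    mderiv α (monomial d c)
      = monomial (d - ∑ j, Finsupp.single j (α j))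
          (c * ∏ j, ((d j).descFactorial (α j) : ℝ)) := by
  unfold mderiv
  rw [foldl_pderiv_monomial α (List.finRange n) (List.nodup_finRange n)]
  rw [show ((List.finRange n).map (fun j => Finsupp.single j (α j))).sum
      = ∑ j, Finsupp.single j (α j) from (Fin.sum_univ_def _).symm]
  rw [show ((List.finRange n).map (fun j => ((d j).descFactorial (α j) : ℝ))).prod
      = ∏ j, ((d j).descFactorial (α j) : ℝ) from (Fin.prod_univ_def _).symm]

lemma desc_desc (x a b : ℕ) :
    (x.descFactorial a) * ((x - a).descFactorial b) = x.descFactorial (a + b) := by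
  induction b with
  | zero => simp
  | succ b ih =>
    rw [Nat.descFactorial_succ, show a + (b+1) = (a+b)+1 by omega, Nat.descFactorial_succ,
      ← ih, Nat.sub_sub]
    ring

lemma mderiv_mderiv (α β : Fin n → ℕ) (P : MvPolynomial (Fin n) ℝ) :
    mderiv β (mderiv α P) = mderiv (fun j => α j + β j) P := by
  induction P using MvPolynomial.induction_on' with
  | monomial d c =>
    rw [mderiv_monomial, mderiv_monomial, mderiv_monomial]
    have hidx : (d - ∑ i, Finsupp.single i (α i)) - ∑ i, Finsupp.single i (β i)
        = d - ∑ i, Finsupp.single i (α i + β i) := by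
      ext i
      simp only [Finsupp.tsub_apply, esum_apply]
      omega
    rw [hidx]
    refine congrArg _ ?_
    have hdj : ∀ j, ((d - ∑ i, Finsupp.single i (α i)) j : ℕ) = d j - α j := by
      intro j
      simp [Finsupp.tsub_apply, esum_apply]
    have hprod : (∏ j, (((d - ∑ i, Finsupp.single i (α i)) j).descFactorial (β j) : ℝ))
        = ∏ j, ((d j - α j).descFactorial (β j) : ℝ) := by
      apply Finset.prod_congr rfl
      intro j _
      rw [hdj j]
    rw [hprod, mul_assoc, ← Finset.prod_mul_distrib]
    refine congrArg _ (Finset.prod_congr rfl fun j _ => ?_)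
    rw [← Nat.cast_mul, desc_desc]
  | add p q hp hq =>
    rw [mderiv_add, mderiv_add, mderiv_add, hp, hq]

lemma totalDegree_mderiv_le {k : ℕ} (α : Fin n → ℕ) (P : MvPolynomial (Fin n) ℝ)
    (hP : P.totalDegree ≤ k) (hα : ∑ j, α j ≤ k) :
    (mderiv α P).totalDegree ≤ k - ∑ j, α j := by
  conv_lhs => rw [P.as_sum]
  rw [mderiv_sum]
  apply le_trans (MvPolynomial.totalDegree_finset_sum _ _)
  apply Finset.sup_le
  intro d hd
  rw [mderiv_monomial]
  by_cases hc : (MvPolynomial.coeff d P * ∏ j, ((d j).descFactorial (α j) : ℝ)) = 0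
  · rw [hc, map_zero]
    simp
  · rw [MvPolynomial.totalDegree_monomial _ hc]
    have hαd : ∀ j, α j ≤ d j := by
      intro j
      by_contra hcon
      push_neg at hcon
      apply hc
      have : ((d j).descFactorial (α j) : ℝ) = 0 := by
        rw [Nat.descFactorial_eq_zero_iff_lt.2 hcon]; norm_num
      rw [Finset.prod_eq_zero (Finset.mem_univ j) this, mul_zero]
    have hsum : (d - ∑ j, Finsupp.single j (α j)).sum (fun _ e => e)
        = ∑ j, (d j - α j) := by
      rw [Finsupp.sum_fintype]
      · apply Finset.sum_congr rfl
        intro j _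
        simp [Finsupp.tsub_apply, esum_apply]
      · intro; rfl
    have hds : d.sum (fun _ e => e) = ∑ j, d j := by
      rw [Finsupp.sum_fintype]; intro; rfl
    have hdk : ∑ j, d j ≤ k := by
      rw [← hds]
      exact le_trans (MvPolynomial.le_totalDegree hd) hP
    have : ∑ j, (d j - α j) + ∑ j, α j = ∑ j, d j := by
      rw [← Finset.sum_add_distrib]
      apply Finset.sum_congr rfl
      intro j _
      have := hαd j
      omega
    rw [hsum]
    omega

end MderivFacts

section TaylorFacts

variable {n : ℕ}

lemma mem_multiIndices {m : ℕ} {β : Fin n → ℕ} :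
    β ∈ multiIndices n m ↔ (∀ j, β j < m + 1) ∧ (∑ i, β i) ≤ m := by
  simp [multiIndices, Fintype.mem_piFinset, Finset.mem_filter, Finset.mem_range]

lemma mem_multiIndices_of_sum {m : ℕ} {β : Fin n → ℕ} (h : ∑ i, β i ≤ m) :
    β ∈ multiIndices n m := by
  rw [mem_multiIndices]
  refine ⟨fun j => ?_, h⟩
  have : β j ≤ ∑ i, β i :=
    Finset.single_le_sum (fun i _ => Nat.zero_le (β i)) (Finset.mem_univ j)
  omega

lemma sum_le_of_mem_multiIndices {m : ℕ} {β : Fin n → ℕ} (h : β ∈ multiIndices n m) :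
    ∑ i, β i ≤ m := (mem_multiIndices.1 h).2

set_option maxHeartbeats 1000000 in
lemma taylor_monomial (m : ℕ) (d : Fin n →₀ ℕ) (hd : (∑ j, d j) ≤ m) (c : ℝ)
    (x y : Fin n → ℝ) :
    eval y (monomial d c) = ∑ β ∈ multiIndices n m,
      eval x (mderiv β (monomial d c)) * (∏ j, (y j - x j) ^ β j)
        / (∏ j, ((β j).factorial : ℝ)) := by
  have hsub : (Fintype.piFinset fun j : Fin n => Finset.range (d j + 1)) ⊆ multiIndices n m := by
    intro β hβ
    rw [Fintype.mem_piFinset] at hβ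
    apply mem_multiIndices_of_sum
    calc ∑ i, β i ≤ ∑ i, d i := by
          apply Finset.sum_le_sum
          intro i _
          have := hβ i
          rw [Finset.mem_range] at this
          omega
      _ ≤ m := hd
  rw [← Finset.sum_subset hsub]
  · -- main computation over the box
    have hterm : ∀ β ∈ (Fintype.piFinset fun j : Fin n => Finset.range (d j + 1)),
        eval x (mderiv β (monomial d c)) * (∏ j, (y j - x j) ^ β j)
          / (∏ j, ((β j).factorial : ℝ))
        = c * ∏ j, (((d j).choose (β j) : ℝ) * x j ^ (d j - β j) * (y j - x j) ^ β j) := by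
      intro β hβ
      rw [mderiv_monomial, eval_monomial]
      have hprodx : ((d - ∑ j, Finsupp.single j (β j)).prod fun i e => x i ^ e)
          = ∏ j, x j ^ (d j - β j) := by
        rw [Finsupp.prod_pow]
        apply Finset.prod_congr rfl
        intro j _
        congr 1
        simp [Finsupp.tsub_apply, esum_apply]
      rw [hprodx]
      rw [div_eq_iff (by positivity : (∏ j, ((β j).factorial : ℝ)) ≠ 0)]
      simp only [Finset.prod_mul_distrib]
      have hdc : (∏ j, ((d j).descFactorial (β j) : ℝ))
          = (∏ j, ((d j).choose (β j) : ℝ)) * ∏ j, ((β j).factorial : ℝ) := by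
        rw [← Finset.prod_mul_distrib]
        apply Finset.prod_congr rfl
        intro j _
        rw [← Nat.cast_mul, Nat.descFactorial_eq_factorial_mul_choose]
        push_cast
        ring
      rw [hdc]
      ring
    rw [Finset.sum_congr rfl hterm]
    rw [← Finset.mul_sum]
    rw [show (∑ β ∈ Fintype.piFinset fun j : Fin n => Finset.range (d j + 1),
        ∏ j, (((d j).choose (β j) : ℝ) * x j ^ (d j - β j) * (y j - x j) ^ β j))
        = ∏ j, ∑ b ∈ Finset.range (d j + 1),
            (((d j).choose b : ℝ) * x j ^ (d j - b) * (y j - x j) ^ b)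
      from (Finset.prod_univ_sum (κ := fun _ : Fin n => ℕ)
        (fun j => Finset.range (d j + 1))
        (fun j b => ((d j).choose b : ℝ) * x j ^ (d j - b) * (y j - x j) ^ b)).symm]
    rw [eval_monomial]
    have : ((d.prod fun i e => y i ^ e)) = ∏ j, y j ^ d j := Finsupp.prod_pow d _
    rw [this]
    congr 1
    apply Finset.prod_congr rfl
    intro j _
    have hbin := add_pow (y j - x j) (x j) (d j)
    have : (y j - x j) + x j = y j := by ring
    rw [this] at hbin
    rw [hbin]
    apply Finset.sum_congr rfl
    intro b hb
    ring
  · -- vanishing terms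
    intro β hβmem hβnot
    rw [Fintype.mem_piFinset] at hβnot
    push_neg at hβnot
    obtain ⟨j, hj⟩ := hβnot
    rw [Finset.mem_range] at hj
    push_neg at hj
    have hdesc : ((d j).descFactorial (β j) : ℝ) = 0 := by
      rw [Nat.descFactorial_eq_zero_iff_lt.2 (by omega)]
      norm_num
    rw [mderiv_monomial]
    have : c * ∏ i, ((d i).descFactorial (β i) : ℝ) = 0 := by
      rw [Finset.prod_eq_zero (Finset.mem_univ j) hdesc, mul_zero]
    rw [this, map_zero, map_zero, zero_mul, zero_div]

lemma taylor_expand (m : ℕ) (Q : MvPolynomial (Fin n) ℝ) (hQ : Q.totalDegree ≤ m)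
    (x y : Fin n → ℝ) :
    eval y Q = ∑ β ∈ multiIndices n m,
      eval x (mderiv β Q) * (∏ j, (y j - x j) ^ β j) / (∏ j, ((β j).factorial : ℝ)) := by
  have key : ∀ d ∈ Q.support, eval y (monomial d (MvPolynomial.coeff d Q))
      = ∑ β ∈ multiIndices n m,
        eval x (mderiv β (monomial d (MvPolynomial.coeff d Q))) * (∏ j, (y j - x j) ^ β j)
          / (∏ j, ((β j).factorial : ℝ)) := by
    intro d hd
    apply taylor_monomial
    have hds : d.sum (fun _ e => e) = ∑ j, d j := by
      rw [Finsupp.sum_fintype]; intro; rfl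
    rw [← hds]
    exact le_trans (MvPolynomial.le_totalDegree hd) hQ
  calc eval y Q = ∑ d ∈ Q.support, eval y (monomial d (MvPolynomial.coeff d Q)) := by
        conv_lhs => rw [Q.as_sum]
        rw [map_sum]
    _ = ∑ d ∈ Q.support, ∑ β ∈ multiIndices n m,
          eval x (mderiv β (monomial d (MvPolynomial.coeff d Q))) * (∏ j, (y j - x j) ^ β j)
            / (∏ j, ((β j).factorial : ℝ)) := Finset.sum_congr rfl key
    _ = ∑ β ∈ multiIndices n m, ∑ d ∈ Q.support,
          eval x (mderiv β (monomial d (MvPolynomial.coeff d Q))) * (∏ j, (y j - x j) ^ β j)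
            / (∏ j, ((β j).factorial : ℝ)) := Finset.sum_comm
    _ = ∑ β ∈ multiIndices n m,
          eval x (mderiv β Q) * (∏ j, (y j - x j) ^ β j) / (∏ j, ((β j).factorial : ℝ)) := by
        apply Finset.sum_congr rfl
        intro β _
        rw [← Finset.sum_div, ← Finset.sum_mul, ← map_sum, ← mderiv_sum]
        conv_rhs => rw [Q.as_sum]

lemma eval_eq_of_deg_zero (Q : MvPolynomial (Fin n) ℝ) (hQ : Q.totalDegree ≤ 0)
    (x y : Fin n → ℝ) : eval y Q = eval x Q := by
  have h := taylor_expand 0 Q hQ x y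
  have hmi : multiIndices n 0 = {fun _ => 0} := by
    ext β
    rw [mem_multiIndices]
    simp only [Finset.mem_singleton]
    constructor
    · rintro ⟨h1, _⟩
      funext j
      have := h1 j
      omega
    · rintro rfl
      simp
  rw [h, hmi, Finset.sum_singleton, mderiv_zero_fun]
  simp

lemma sum_inv_factorials_le (m : ℕ) :
    ∑ β ∈ multiIndices n m, (∏ j, ((β j).factorial : ℝ))⁻¹ ≤ Real.exp n := by
  have h1 : ∑ β ∈ multiIndices n m, (∏ j, ((β j).factorial : ℝ))⁻¹
      ≤ ∑ β ∈ (Fintype.piFinset fun _ : Fin n => Finset.range (m + 1)),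
          (∏ j, ((β j).factorial : ℝ))⁻¹ := by
    apply Finset.sum_le_sum_of_subset_of_nonneg
    · intro β hβ
      rw [mem_multiIndices] at hβ
      rw [Fintype.mem_piFinset]
      intro j
      rw [Finset.mem_range]
      exact hβ.1 j
    · intro β _ _
      positivity
  have h2 : ∑ β ∈ (Fintype.piFinset fun _ : Fin n => Finset.range (m + 1)),
      (∏ j, ((β j).factorial : ℝ))⁻¹
      = ∏ _j : Fin n, ∑ b ∈ Finset.range (m + 1), ((b.factorial : ℝ))⁻¹ := by
    rw [Finset.prod_univ_sum]
    apply Finset.sum_congr rfl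
    intro β _
    rw [← Finset.prod_inv_distrib]
  have h3 : ∑ b ∈ Finset.range (m + 1), ((b.factorial : ℝ))⁻¹ ≤ Real.exp 1 := by
    have h := Real.sum_le_exp_of_nonneg zero_le_one (m + 1)
    simpa [one_div] using h
  calc ∑ β ∈ multiIndices n m, (∏ j, ((β j).factorial : ℝ))⁻¹
      ≤ ∑ β ∈ (Fintype.piFinset fun _ : Fin n => Finset.range (m + 1)),
          (∏ j, ((β j).factorial : ℝ))⁻¹ := h1
    _ = ∏ _j : Fin n, ∑ b ∈ Finset.range (m + 1), ((b.factorial : ℝ))⁻¹ := h2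
    _ ≤ ∏ _j : Fin n, Real.exp 1 := by
        apply Finset.prod_le_prod
        · intro j _
          positivity
        · intro j _
          exact h3
    _ = Real.exp n := by
        rw [Finset.prod_const, Finset.card_univ, Fintype.card_fin, ← Real.exp_nat_mul, mul_one]

end TaylorFacts

section Geometry

variable {n : ℕ}

lemma abs_coord_le_norm (v : EuclideanSpace ℝ (Fin n)) (j : Fin n) : |v j| ≤ ‖v‖ := by
  rw [EuclideanSpace.norm_eq]
  have h1 : |v j| = Real.sqrt (‖v j‖ ^ 2) := by
    rw [Real.sqrt_sq (norm_nonneg _), Real.norm_eq_abs]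
  rw [h1]
  apply Real.sqrt_le_sqrt
  exact Finset.single_le_sum (fun i _ => sq_nonneg ‖v i‖) (Finset.mem_univ j)

lemma norm_tel (v : ℕ → EuclideanSpace ℝ (Fin n)) (a : ℕ) :
    ∀ b, a ≤ b → ‖v a - v b‖ ≤ ∑ j ∈ Finset.Ico a b, ‖v j - v (j + 1)‖ := by
  intro b hb
  induction b, hb using Nat.le_induction with
  | base => simp
  | succ b hab ih =>
    rw [Finset.sum_Ico_succ_top hab]
    calc ‖v a - v (b + 1)‖ ≤ ‖v a - v b‖ + ‖v b - v (b + 1)‖ := by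
          have h : v a - v (b + 1) = (v a - v b) + (v b - v (b + 1)) := by abel
          rw [h]; exact norm_add_le _ _
      _ ≤ _ := by linarith [ih]

end Geometry

section CoreBound

variable {n k : ℕ} {ω : ℝ → ℝ}

lemma core_bound (hnn : ∀ t, 0 ≤ t → 0 ≤ ω t)
    (m : ℕ) (P : ℕ → MvPolynomial (Fin n) ℝ) (z : ℕ → EuclideanSpace ℝ (Fin n))
    (y : EuclideanSpace ℝ (Fin n)) (s : ℕ → ℝ)
    (hdeg : ∀ i, i ≤ m → (P i).totalDegree ≤ k)
    (hs : ∀ i, i < m → 0 ≤ s i)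
    (hcoef : ∀ i, i < m → ∀ γ : Fin n → ℕ, (∑ j, γ j) ≤ k →
      |eval (fun j => (z i) j) (mderiv γ (P i - P (i + 1)))| ≤ s i ^ (k - ∑ j, γ j) * ω (s i))
    (hdist : ∀ i, i < m → ‖y - z i‖ ≤ ∑ j ∈ Finset.range m, s j)
    (α : Fin n → ℕ) (hα : ∑ j, α j ≤ k) :
    |eval (fun j => y j) (mderiv α (P 0 - P m))|
      ≤ Real.exp n * (∑ j ∈ Finset.range m, s j) ^ (k - ∑ j, α j)
        * ∑ i ∈ Finset.range m, ω (s i) := by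
  set σ := ∑ j ∈ Finset.range m, s j with hσdef
  have hσ0 : 0 ≤ σ := Finset.sum_nonneg fun j hj => hs j (Finset.mem_range.1 hj)
  have htel : P 0 - P m = ∑ i ∈ Finset.range m, (P i - P (i + 1)) :=
    (Finset.sum_range_sub' P m).symm
  rw [htel, mderiv_sum, map_sum, Finset.mul_sum]
  refine le_trans (Finset.abs_sum_le_sum_abs _ _) (Finset.sum_le_sum ?_)
  intro i hi
  have him := Finset.mem_range.1 hi
  have hsi0 : 0 ≤ s i := hs i him
  have hωsi : 0 ≤ ω (s i) := hnn _ hsi0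
  have hsiσ : s i ≤ σ := Finset.single_le_sum (fun j hj => hs j (Finset.mem_range.1 hj)) hi
  have hQdeg : (mderiv α (P i - P (i + 1))).totalDegree ≤ k - ∑ j, α j := by
    apply totalDegree_mderiv_le
    · exact le_trans (MvPolynomial.totalDegree_sub _ _)
        (max_le (hdeg i him.le) (hdeg (i + 1) him))
    · exact hα
  rw [taylor_expand (k - ∑ j, α j) _ hQdeg (fun j => z i j) (fun j => y j)]
  refine le_trans (Finset.abs_sum_le_sum_abs _ _) ?_
  have hterm : ∀ β ∈ multiIndices n (k - ∑ j, α j),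
      |eval (fun j => z i j) (mderiv β (mderiv α (P i - P (i + 1))))
          * (∏ j, ((fun j => y j) j - (fun j => z i j) j) ^ β j)
          / (∏ j, ((β j).factorial : ℝ))|
        ≤ (σ ^ (k - ∑ j, α j) * ω (s i)) * (∏ j, ((β j).factorial : ℝ))⁻¹ := by
    intro β hβ
    have hb : ∑ j, β j ≤ k - ∑ j, α j := sum_le_of_mem_multiIndices hβ
    rw [abs_div, abs_mul, div_eq_mul_inv]
    have hfact : |∏ j, ((β j).factorial : ℝ)| = ∏ j, ((β j).factorial : ℝ) := by
      apply abs_of_pos; positivity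
    rw [hfact]
    apply mul_le_mul_of_nonneg_right _ (by positivity)
    -- |eval| * |prod| ≤ σ^(k-a) * ω (s i)
    have hbound1 : |eval (fun j => z i j) (mderiv β (mderiv α (P i - P (i + 1))))|
        ≤ s i ^ (k - (∑ j, α j) - (∑ j, β j)) * ω (s i) := by
      rw [mderiv_mderiv]
      have hsumγ : (∑ j, (α j + β j)) = (∑ j, α j) + (∑ j, β j) :=
        Finset.sum_add_distrib
      have hγk : (∑ j, (α j + β j)) ≤ k := by rw [hsumγ]; omega
      have := hcoef i him (fun j => α j + β j) hγk
      rwa [hsumγ, Nat.sub_add_eq] at this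
    have hbound2 : |∏ j, ((fun j => y j) j - (fun j => z i j) j) ^ β j|
        ≤ σ ^ (∑ j, β j) := by
      rw [Finset.abs_prod]
      have hcoord : ∀ j : Fin n, |y j - z i j| ≤ σ := by
        intro j
        have h1 : |y j - z i j| = |(y - z i) j| := by rw [PiLp.sub_apply]
        rw [h1]
        exact le_trans (abs_coord_le_norm _ _) (hdist i him)
      calc ∏ j, |((fun j => y j) j - (fun j => z i j) j) ^ β j|
          = ∏ j, |y j - z i j| ^ β j := by
            apply Finset.prod_congr rfl; intro j _; rw [abs_pow]
        _ ≤ ∏ j, σ ^ β j := by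
            apply Finset.prod_le_prod
            · intro j _; positivity
            · intro j _; exact pow_le_pow_left₀ (abs_nonneg _) (hcoord j) _
        _ = σ ^ (∑ j, β j) := Finset.prod_pow_eq_pow_sum _ _ _
    calc |eval (fun j => z i j) (mderiv β (mderiv α (P i - P (i + 1))))|
          * |∏ j, ((fun j => y j) j - (fun j => z i j) j) ^ β j|
        ≤ (s i ^ (k - (∑ j, α j) - (∑ j, β j)) * ω (s i)) * σ ^ (∑ j, β j) := by
          apply mul_le_mul hbound1 hbound2 (abs_nonneg _) (by positivity)
      _ ≤ (σ ^ (k - (∑ j, α j) - (∑ j, β j)) * ω (s i)) * σ ^ (∑ j, β j) := by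
          apply mul_le_mul_of_nonneg_right _ (by positivity)
          exact mul_le_mul_of_nonneg_right (pow_le_pow_left₀ hsi0 hsiσ _) hωsi
      _ = σ ^ (k - ∑ j, α j) * ω (s i) := by
          rw [mul_comm (σ ^ (k - (∑ j, α j) - (∑ j, β j))) (ω (s i)), mul_assoc,
            ← pow_add, Nat.sub_add_cancel hb]
          ring
  refine le_trans (Finset.sum_le_sum hterm) ?_
  rw [← Finset.mul_sum]
  have hfac := sum_inv_factorials_le (n := n) (k - ∑ j, α j)
  calc σ ^ (k - ∑ j, α j) * ω (s i) * ∑ β ∈ multiIndices n (k - ∑ j, α j),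
        (∏ j, ((β j).factorial : ℝ))⁻¹
      ≤ σ ^ (k - ∑ j, α j) * ω (s i) * Real.exp n := by
        apply mul_le_mul_of_nonneg_left hfac (by positivity)
    _ = Real.exp n * σ ^ (k - ∑ j, α j) * ω (s i) := by ring

end CoreBound

section PointBound

variable {n k : ℕ} {ω : ℝ → ℝ}

lemma phi_point_bound (hnn : ∀ t, 0 ≤ t → 0 ≤ ω t) (hcont : ContinuousOn ω (Set.Ici 0))
    (hmono : StrictMonoOn ω (Set.Ici 0)) (hconc : ConcaveOn ℝ (Set.Ici 0) ω) (h0 : ω 0 = 0)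
    (m : ℕ) (P : ℕ → MvPolynomial (Fin n) ℝ) (z : ℕ → EuclideanSpace ℝ (Fin n))
    (y : EuclideanSpace ℝ (Fin n)) (d u : ℕ → ℝ)
    (hdeg : ∀ i, i ≤ m → (P i).totalDegree ≤ k)
    (hd0 : ∀ i, i < m → 0 ≤ d i)
    (hphi : ∀ i, i < m → ∀ γ : Fin n → ℕ, (∑ j, γ j) ≤ k →
      phiOm ω k (∑ j, γ j) |eval (fun j => (z i) j) (mderiv γ (P i - P (i + 1)))| ≤ d i)
    (hu : ∀ i, i < m → 0 ≤ u i) (hou : ∀ i, i < m → ω (u i) ≤ d i)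
    (hyz : ∀ i, i < m → ∃ F : Finset ℕ, F ⊆ Finset.range m ∧ ‖y - z i‖ ≤ ∑ j ∈ F, u j)
    (α : Fin n → ℕ) (hα : ∑ j, α j ≤ k) :
    phiOm ω k (∑ j, α j) ((Real.exp n)⁻¹ * |eval (fun j => y j) (mderiv α (P 0 - P m))|)
      ≤ ∑ i ∈ Finset.range m, d i := by
  set D := ∑ i ∈ Finset.range m, d i with hDdef
  have hD0 : 0 ≤ D := Finset.sum_nonneg fun i hi => hd0 i (Finset.mem_range.1 hi)
  have habs0 : 0 ≤ (Real.exp n)⁻¹ * |eval (fun j => y j) (mderiv α (P 0 - P m))| := by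
    positivity
  by_cases hA : ∃ s, 0 ≤ s ∧ ω s = D
  · obtain ⟨s, hs0, hsD⟩ := hA
    have hex : ∀ i, ∃ v, 0 ≤ v ∧ (i < m → ω v = d i) := by
      intro i
      by_cases hi : i < m
      · have hdi0 : 0 ≤ d i := hd0 i hi
        have hdiD : d i ≤ D :=
          Finset.single_le_sum (fun j hj => hd0 j (Finset.mem_range.1 hj))
            (Finset.mem_range.2 hi)
        have hmem : d i ∈ Set.Icc (ω 0) (ω s) := ⟨by rw [h0]; exact hdi0, by rw [hsD]; exact hdiD⟩
        obtain ⟨v, hv, hωv⟩ := intermediate_value_Icc hs0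
          (hcont.mono Set.Icc_subset_Ici_self) hmem
        exact ⟨v, hv.1, fun _ => hωv⟩
      · exact ⟨0, le_rfl, fun h => absurd h hi⟩
    choose sv hsv0 hsveq using hex
    set σ := ∑ j ∈ Finset.range m, sv j with hσdef
    have hσ0 : 0 ≤ σ := Finset.sum_nonneg fun j _ => hsv0 j
    have hsum : ∑ i ∈ Finset.range m, ω (sv i) = D :=
      Finset.sum_congr rfl fun i hi => hsveq i (Finset.mem_range.1 hi)
    have hσs : σ ≤ s := by
      have h1 : ω σ ≤ ∑ i ∈ Finset.range m, ω (sv i) :=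
        omega_sum_le hconc h0 m sv fun i _ => hsv0 i
      by_contra hc
      push_neg at hc
      have h2 := hmono hs0 hσ0 hc
      rw [hsD] at h2
      rw [hsum] at h1
      linarith
    have hcoef : ∀ i, i < m → ∀ γ : Fin n → ℕ, (∑ j, γ j) ≤ k →
        |eval (fun j => (z i) j) (mderiv γ (P i - P (i + 1)))|
          ≤ sv i ^ (k - ∑ j, γ j) * ω (sv i) := by
      intro i hi γ hγ
      apply le_of_phiOm_le hnn hcont hmono h0 hγ (abs_nonneg _) (hsv0 i)
      rw [hsveq i hi]
      exact hphi i hi γ hγ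
    have hdist : ∀ i, i < m → ‖y - z i‖ ≤ σ := by
      intro i hi
      obtain ⟨F, hF, hyF⟩ := hyz i hi
      calc ‖y - z i‖ ≤ ∑ j ∈ F, u j := hyF
        _ ≤ ∑ j ∈ F, sv j := by
            apply Finset.sum_le_sum
            intro j hj
            have hjm := Finset.mem_range.1 (hF hj)
            by_contra hc
            push_neg at hc
            have h2 := hmono (hsv0 j) (hu j hjm) hc
            rw [hsveq j hjm] at h2
            linarith [hou j hjm]
        _ ≤ σ := Finset.sum_le_sum_of_subset_of_nonneg hF fun j _ _ => hsv0 j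
    have hcore := core_bound hnn m P z y sv hdeg (fun i _ => hsv0 i) hcoef hdist α hα
    rw [← hσdef, hsum] at hcore
    have ht0 : (Real.exp n)⁻¹ * |eval (fun j => y j) (mderiv α (P 0 - P m))|
        ≤ σ ^ (k - ∑ j, α j) * D := by
      have h1 := mul_le_mul_of_nonneg_left hcore
        (inv_nonneg.2 (Real.exp_pos (n : ℝ)).le)
      have h2 : (Real.exp n)⁻¹ * (Real.exp n * σ ^ (k - ∑ j, α j) * D)
          = σ ^ (k - ∑ j, α j) * D := by
        field_simp
      rw [h2] at h1
      exact h1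
    have hfinal : (Real.exp n)⁻¹ * |eval (fun j => y j) (mderiv α (P 0 - P m))|
        ≤ s ^ (k - ∑ j, α j) * ω s := by
      rw [hsD]
      calc _ ≤ σ ^ (k - ∑ j, α j) * D := ht0
        _ ≤ s ^ (k - ∑ j, α j) * D :=
            mul_le_mul_of_nonneg_right (pow_le_pow_left₀ hσ0 hσs _) hD0
    calc phiOm ω k (∑ j, α j)
          ((Real.exp n)⁻¹ * |eval (fun j => y j) (mderiv α (P 0 - P m))|)
        ≤ ω s := phiOm_le_omega hnn hcont hmono h0 hα habs0 hs0 hfinal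
      _ = D := hsD
  · push_neg at hA
    have hlt : ∀ v, 0 ≤ v → ω v < D :=
      omega_lt_of_not_eq hcont h0 hD0 fun s hs => hA s hs
    by_cases hak : (∑ j, α j) < k
    · exact (phiOm_lt hnn hcont hmono h0 hak habs0 hlt).le
    · have hid : phiOm ω k (∑ j, α j)
          ((Real.exp n)⁻¹ * |eval (fun j => y j) (mderiv α (P 0 - P m))|)
          = (Real.exp n)⁻¹ * |eval (fun j => y j) (mderiv α (P 0 - P m))| := by
        unfold phiOm
        rw [if_neg hak]
      rw [hid]
      have hE : |eval (fun j => y j) (mderiv α (P 0 - P m))| ≤ D := by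
        have htel : P 0 - P m = ∑ i ∈ Finset.range m, (P i - P (i + 1)) :=
          (Finset.sum_range_sub' P m).symm
        rw [htel, mderiv_sum, map_sum]
        refine le_trans (Finset.abs_sum_le_sum_abs _ _) (Finset.sum_le_sum ?_)
        intro i hi
        have him := Finset.mem_range.1 hi
        have hQdeg : (mderiv α (P i - P (i + 1))).totalDegree ≤ 0 := by
          have h1 : (mderiv α (P i - P (i + 1))).totalDegree ≤ k - ∑ j, α j := by
            apply totalDegree_mderiv_le
            · exact le_trans (MvPolynomial.totalDegree_sub _ _)
                (max_le (hdeg i him.le) (hdeg (i + 1) him))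
            · exact hα
          omega
        rw [show eval (fun j => y j) (mderiv α (P i - P (i + 1)))
            = eval (fun j => (z i) j) (mderiv α (P i - P (i + 1))) from
          eval_eq_of_deg_zero _ hQdeg _ _]
        have h2 := hphi i him α hα
        rwa [show phiOm ω k (∑ j, α j)
            |eval (fun j => (z i) j) (mderiv α (P i - P (i + 1)))|
            = |eval (fun j => (z i) j) (mderiv α (P i - P (i + 1)))| from by
          unfold phiOm; rw [if_neg hak]] at h2
      have hinv : (Real.exp (n : ℝ))⁻¹ ≤ 1 := by
        rw [inv_le_one_iff₀]
        right
        exact Real.one_le_exp (Nat.cast_nonneg n)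
      calc (Real.exp n)⁻¹ * |eval (fun j => y j) (mderiv α (P 0 - P m))|
          ≤ 1 * |eval (fun j => y j) (mderiv α (P 0 - P m))| :=
            mul_le_mul_of_nonneg_right hinv (abs_nonneg _)
        _ = |eval (fun j => y j) (mderiv α (P 0 - P m))| := one_mul _
        _ ≤ D := hE

end PointBound

section DOmFacts

variable {n k : ℕ} {ω : ℝ → ℝ}

lemma zero_mem_multiIndices : (fun _ => 0) ∈ multiIndices n k := by
  simp [multiIndices]

lemma dOm_ge_omega (T T' : MvPolynomial (Fin n) ℝ × EuclideanSpace ℝ (Fin n)) :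
    ω ‖T.2 - T'.2‖ ≤ dOm ω k T T' := by
  have h := Finset.le_sup' (fun α : Fin n → ℕ => max (ω ‖T.2 - T'.2‖)
      (max (phiOm ω k (∑ i, α i) |eval (fun i => T.2 i) (mderiv α (T.1 - T'.1))|)
           (phiOm ω k (∑ i, α i) |eval (fun i => T'.2 i) (mderiv α (T.1 - T'.1))|)))
      (zero_mem_multiIndices (n := n) (k := k))
  exact le_trans (le_max_left _ _) h

lemma dOm_ge_phi1 (T T' : MvPolynomial (Fin n) ℝ × EuclideanSpace ℝ (Fin n))
    {α : Fin n → ℕ} (hα : α ∈ multiIndices n k) :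
    phiOm ω k (∑ i, α i) |eval (fun i => T.2 i) (mderiv α (T.1 - T'.1))| ≤ dOm ω k T T' := by
  have h := Finset.le_sup' (fun α : Fin n → ℕ => max (ω ‖T.2 - T'.2‖)
      (max (phiOm ω k (∑ i, α i) |eval (fun i => T.2 i) (mderiv α (T.1 - T'.1))|)
           (phiOm ω k (∑ i, α i) |eval (fun i => T'.2 i) (mderiv α (T.1 - T'.1))|))) hα
  exact le_trans (le_trans (le_max_left _ _) (le_max_right _ _)) h

lemma dOm_ge_phi2 (T T' : MvPolynomial (Fin n) ℝ × EuclideanSpace ℝ (Fin n))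
    {α : Fin n → ℕ} (hα : α ∈ multiIndices n k) :
    phiOm ω k (∑ i, α i) |eval (fun i => T'.2 i) (mderiv α (T.1 - T'.1))| ≤ dOm ω k T T' := by
  have h := Finset.le_sup' (fun α : Fin n → ℕ => max (ω ‖T.2 - T'.2‖)
      (max (phiOm ω k (∑ i, α i) |eval (fun i => T.2 i) (mderiv α (T.1 - T'.1))|)
           (phiOm ω k (∑ i, α i) |eval (fun i => T'.2 i) (mderiv α (T.1 - T'.1))|))) hα
  exact le_trans (le_trans (le_max_right _ _) (le_max_right _ _)) h

lemma dOm_nonneg (hnn : ∀ t, 0 ≤ t → 0 ≤ ω t)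
    (T T' : MvPolynomial (Fin n) ℝ × EuclideanSpace ℝ (Fin n)) :
    0 ≤ dOm ω k T T' :=
  le_trans (hnn _ (norm_nonneg _)) (dOm_ge_omega T T')

end DOmFacts

theorem dOm_delOm_comparison' {n k : ℕ} (hk : 1 ≤ k)
    (ω : ℝ → ℝ)
    (hnn : ∀ t, 0 ≤ t → 0 ≤ ω t)
    (hcont : ContinuousOn ω (Set.Ici 0))
    (hmono : StrictMonoOn ω (Set.Ici 0))
    (hconc : ConcaveOn ℝ (Set.Ici 0) ω)
    (h0 : ω 0 = 0)
    (T T' : MvPolynomial (Fin n) ℝ × EuclideanSpace ℝ (Fin n))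
    (hT : T.1.totalDegree ≤ k) (hT' : T'.1.totalDegree ≤ k) :
    delOm ω k T T' ≤ dOm ω k T T' ∧
      dOm ω k T T' ≤ delOm ω k (scaleJet (Real.exp n) T) (scaleJet (Real.exp n) T') := by
  constructor
  · apply csInf_le
    · refine ⟨0, fun r hr => ?_⟩
      obtain ⟨m, c, -, -, -, rfl⟩ := hr
      exact Finset.sum_nonneg fun i _ => dOm_nonneg hnn _ _
    · refine ⟨1, fun i => if i = 0 then T else T', if_pos rfl, if_neg one_ne_zero, ?_, ?_⟩
      · intro i hi
        interval_cases i
        · show (if (0:ℕ) = 0 then T else T').1.totalDegree ≤ k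
          rw [if_pos rfl]; exact hT
        · show (if (1:ℕ) = 0 then T else T').1.totalDegree ≤ k
          rw [if_neg one_ne_zero]; exact hT'
      · rw [Finset.sum_range_one]
        show dOm ω k T T'
          = dOm ω k (if (0:ℕ) = 0 then T else T') (if (0 + 1 : ℕ) = 0 then T else T')
        rw [if_pos rfl, if_neg (by omega : ¬(0 + 1 : ℕ) = 0)]
  · apply le_csInf
    · refine ⟨dOm ω k (scaleJet (Real.exp n) T) (scaleJet (Real.exp n) T'), 1,
        fun i => if i = 0 then scaleJet (Real.exp n) T else scaleJet (Real.exp n) T',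
        if_pos rfl, if_neg one_ne_zero, ?_, ?_⟩
      · intro i hi
        interval_cases i
        · show (if (0:ℕ) = 0 then scaleJet (Real.exp n) T
              else scaleJet (Real.exp n) T').1.totalDegree ≤ k
          rw [if_pos rfl]
          exact le_trans (MvPolynomial.totalDegree_smul_le _ _) hT
        · show (if (1:ℕ) = 0 then scaleJet (Real.exp n) T
              else scaleJet (Real.exp n) T').1.totalDegree ≤ k
          rw [if_neg one_ne_zero]
          exact le_trans (MvPolynomial.totalDegree_smul_le _ _) hT'
      · rw [Finset.sum_range_one]
        show dOm ω k (scaleJet (Real.exp n) T) (scaleJet (Real.exp n) T')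
          = dOm ω k (if (0:ℕ) = 0 then scaleJet (Real.exp n) T else scaleJet (Real.exp n) T')
              (if (0 + 1 : ℕ) = 0 then scaleJet (Real.exp n) T else scaleJet (Real.exp n) T')
        rw [if_pos rfl, if_neg (by omega : ¬(0 + 1 : ℕ) = 0)]
    · rintro r ⟨m, c, hc0, hcm, hdegc, rfl⟩
      have h02 : T.2 = (c 0).2 := by rw [hc0]; rfl
      have hm2 : T'.2 = (c m).2 := by rw [hcm]; rfl
      apply Finset.sup'_le
      intro α hα
      have hak : ∑ i, α i ≤ k := sum_le_of_mem_multiIndices hα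
      have hP : mderiv α (T.1 - T'.1) = (Real.exp n)⁻¹ • mderiv α ((c 0).1 - (c m).1) := by
        rw [hc0, hcm]
        show mderiv α (T.1 - T'.1)
          = (Real.exp n)⁻¹ • mderiv α ((Real.exp n • T.1) - (Real.exp n • T'.1))
        rw [← smul_sub, mderiv_smul, smul_smul, inv_mul_cancel₀ (Real.exp_ne_zero _), one_smul]
      apply max_le
      · -- distance part
        rw [h02, hm2]
        have hn2 : ‖(c 0).2 - (c m).2‖ ≤ ∑ i ∈ Finset.range m, ‖(c i).2 - (c (i + 1)).2‖ := by
          rw [Finset.range_eq_Ico]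
          exact norm_tel (fun i => (c i).2) 0 m (Nat.zero_le m)
        have hsn : 0 ≤ ∑ i ∈ Finset.range m, ‖(c i).2 - (c (i + 1)).2‖ :=
          Finset.sum_nonneg fun i _ => norm_nonneg _
        calc ω ‖(c 0).2 - (c m).2‖
            ≤ ω (∑ i ∈ Finset.range m, ‖(c i).2 - (c (i + 1)).2‖) :=
              hmono.monotoneOn (Set.mem_Ici.2 (norm_nonneg _)) (Set.mem_Ici.2 hsn) hn2
          _ ≤ ∑ i ∈ Finset.range m, ω ‖(c i).2 - (c (i + 1)).2‖ :=
              omega_sum_le hconc h0 m _ fun i _ => norm_nonneg _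
          _ ≤ ∑ i ∈ Finset.range m, dOm ω k (c i) (c (i + 1)) :=
              Finset.sum_le_sum fun i _ => dOm_ge_omega _ _
      apply max_le
      · -- phi at T.2
        have habs : |eval (fun i => T.2 i) (mderiv α (T.1 - T'.1))|
            = (Real.exp n)⁻¹ * |eval (fun i => T.2 i) (mderiv α ((c 0).1 - (c m).1))| := by
          rw [hP, MvPolynomial.smul_eval, abs_mul,
            abs_of_nonneg (inv_nonneg.2 (Real.exp_pos _).le)]
        rw [habs, h02]
        exact phi_point_bound hnn hcont hmono hconc h0 m (fun i => (c i).1)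
          (fun i => (c i).2) ((c 0).2) (fun i => dOm ω k (c i) (c (i + 1)))
          (fun i => ‖(c i).2 - (c (i + 1)).2‖) hdegc
          (fun i _ => dOm_nonneg hnn _ _)
          (fun i hi γ hγ => dOm_ge_phi1 (c i) (c (i + 1)) (mem_multiIndices_of_sum hγ))
          (fun i _ => norm_nonneg _)
          (fun i _ => dOm_ge_omega _ _)
          (fun i hi => ⟨Finset.Ico 0 i, by
              rw [Finset.range_eq_Ico]
              exact Finset.Ico_subset_Ico le_rfl (le_of_lt hi),
            norm_tel (fun j => (c j).2) 0 i (Nat.zero_le i)⟩)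
          α hak
      · -- phi at T'.2
        have habs : |eval (fun i => T'.2 i) (mderiv α (T.1 - T'.1))|
            = (Real.exp n)⁻¹ * |eval (fun i => T'.2 i) (mderiv α ((c 0).1 - (c m).1))| := by
          rw [hP, MvPolynomial.smul_eval, abs_mul,
            abs_of_nonneg (inv_nonneg.2 (Real.exp_pos _).le)]
        rw [habs, hm2]
        exact phi_point_bound hnn hcont hmono hconc h0 m (fun i => (c i).1)
          (fun i => (c (i + 1)).2) ((c m).2) (fun i => dOm ω k (c i) (c (i + 1)))
          (fun i => ‖(c i).2 - (c (i + 1)).2‖) hdegc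
          (fun i _ => dOm_nonneg hnn _ _)
          (fun i hi γ hγ => dOm_ge_phi2 (c i) (c (i + 1)) (mem_multiIndices_of_sum hγ))
          (fun i _ => norm_nonneg _)
          (fun i _ => dOm_ge_omega _ _)
          (fun i hi => ⟨Finset.Ico (i + 1) m, by
              rw [Finset.range_eq_Ico]
              exact Finset.Ico_subset_Ico (Nat.zero_le _) le_rfl, by
              rw [show (c m).2 - (c (i + 1)).2 = -((c (i+1)).2 - (c m).2) by abel, norm_neg]
              exact norm_tel (fun j => (c j).2) (i + 1) m hi⟩)
          α hak

/-- Theorem 2.1: `δ_ω(T,T') ≤ d_ω(T,T') ≤ δ_ω(eⁿ∘T, eⁿ∘T')`. -/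
theorem dOm_delOm_comparison {n k : ℕ} (hk : 1 ≤ k)
    (ω : ℝ → ℝ)
    (hnn : ∀ t, 0 ≤ t → 0 ≤ ω t)
    (hcont : ContinuousOn ω (Set.Ici 0))
    (hmono : StrictMonoOn ω (Set.Ici 0))
    (hconc : ConcaveOn ℝ (Set.Ici 0) ω)
    (h0 : ω 0 = 0)
    (T T' : MvPolynomial (Fin n) ℝ × EuclideanSpace ℝ (Fin n))
    (hT : T.1.totalDegree ≤ k) (hT' : T'.1.totalDegree ≤ k) :
    delOm ω k T T' ≤ dOm ω k T T' ∧
      dOm ω k T T' ≤ delOm ω k (scaleJet (Real.exp n) T) (scaleJet (Real.exp n) T') := by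
  exact dOm_delOm_comparison' hk ω hnn hcont hmono hconc h0 T T' hT hT'
end

section
/- With notation as in the paper, for every T = (P,x), T' = (P',x') ∈ 𝒫_k × ℝⁿ, setting I := max_{|α| ≤ k} {ω(‖x−x'‖), φ_α(|D^α(P−P')(x)|)} (a 'one-sided' version of d_ω using derivatives only at x), one has e^{−n} δ_ω(T,T') ≤ I ≤ eⁿ δ_ω(T,T'). -/
open MvPolynomial

namespace JetAux

variable {n : ℕ}

lemma mem_multiIndices {m : ℕ} {β : Fin n → ℕ} :
    β ∈ multiIndices n m ↔ (∀ i, β i ≤ m) ∧ (∑ i, β i) ≤ m := by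
  simp only [multiIndices, Finset.mem_filter, Fintype.mem_piFinset, Finset.mem_range,
    Nat.lt_succ_iff]

lemma mem_multiIndices_of_sum_le {m : ℕ} {β : Fin n → ℕ} (h : (∑ i, β i) ≤ m) :
    β ∈ multiIndices n m :=
  mem_multiIndices.2 ⟨fun i => le_trans (Finset.single_le_sum (f := fun i => β i)
    (fun _ _ => Nat.zero_le _) (Finset.mem_univ i)) h, h⟩

lemma pderiv_iterate_add (i : Fin n) (b : ℕ) (P Q : MvPolynomial (Fin n) ℝ) :
    (pderiv i)^[b] (P + Q) = (pderiv i)^[b] P + (pderiv i)^[b] Q := by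
  induction b generalizing P Q with
  | zero => simp
  | succ b ih => simp [Function.iterate_succ_apply, map_add, ih]

lemma pderiv_iterate_zero (i : Fin n) (b : ℕ) :
    (pderiv i)^[b] (0 : MvPolynomial (Fin n) ℝ) = 0 := by
  induction b with
  | zero => simp
  | succ b ih => simp [Function.iterate_succ_apply, ih]

lemma mderiv_add (α : Fin n → ℕ) (P Q : MvPolynomial (Fin n) ℝ) :
    mderiv α (P + Q) = mderiv α P + mderiv α Q := by
  unfold mderiv
  generalize List.finRange n = l
  induction l generalizing P Q with
  | nil => simp
  | cons i l ih => simp only [List.foldl_cons, pderiv_iterate_add, ih]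

lemma mderiv_zero (α : Fin n → ℕ) : mderiv α (0 : MvPolynomial (Fin n) ℝ) = 0 := by
  unfold mderiv
  generalize List.finRange n = l
  induction l with
  | nil => simp
  | cons i l ih => simp only [List.foldl_cons, pderiv_iterate_zero, ih]

lemma mderiv_neg (α : Fin n → ℕ) (P : MvPolynomial (Fin n) ℝ) :
    mderiv α (-P) = -mderiv α P := by
  have h := mderiv_add α P (-P)
  simp only [add_neg_cancel, mderiv_zero] at h
  exact eq_neg_of_add_eq_zero_right h.symm

lemma mderiv_sub (α : Fin n → ℕ) (P Q : MvPolynomial (Fin n) ℝ) :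
    mderiv α (P - Q) = mderiv α P - mderiv α Q := by
  rw [sub_eq_add_neg, mderiv_add, mderiv_neg, sub_eq_add_neg]

lemma mderiv_sum {ι : Type*} (s : Finset ι) (f : ι → MvPolynomial (Fin n) ℝ)
    (α : Fin n → ℕ) : mderiv α (∑ i ∈ s, f i) = ∑ i ∈ s, mderiv α (f i) := by
  classical
  induction s using Finset.induction with
  | empty => simp [mderiv_zero]
  | insert _ _ h ih => rw [Finset.sum_insert h, mderiv_add, ih, Finset.sum_insert h]

lemma pderiv_iterate_monomial (i : Fin n) (b : ℕ) (γ : Fin n →₀ ℕ) (c : ℝ) :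
    (pderiv i)^[b] (monomial γ c) =
      monomial (γ - Finsupp.single i b) (c * ((γ i).descFactorial b : ℝ)) := by
  induction b with
  | zero => simp
  | succ b ih =>
    rw [Function.iterate_succ_apply', ih, pderiv_monomial]
    congr 1
    · rw [tsub_tsub, ← Finsupp.single_add]
    · rw [Finsupp.tsub_apply, Finsupp.single_apply, if_pos rfl,
        Nat.descFactorial_succ]
      push_cast
      ring

/-- `toF α` is `α` as a `Finsupp`. -/
noncomputable def toF (α : Fin n → ℕ) : Fin n →₀ ℕ := ∑ i, Finsupp.single i (α i)

lemma toF_apply (α : Fin n → ℕ) (j : Fin n) : toF α j = α j := by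
  rw [toF, Finset.sum_apply']
  rw [Finset.sum_eq_single j (fun i _ hne => Finsupp.single_eq_of_ne' hne)
    (fun h => absurd (Finset.mem_univ j) h)]
  simp

lemma toF_add (α β : Fin n → ℕ) : toF (fun i => α i + β i) = toF α + toF β := by
  ext j
  simp [toF_apply]

lemma foldl_monomial (α : Fin n → ℕ) (l : List (Fin n)) (hl : l.Nodup)
    (γ : Fin n →₀ ℕ) (c : ℝ) :
    l.foldl (fun Q i => (pderiv i)^[α i] Q) (monomial γ c)
      = monomial (γ - ∑ i ∈ l.toFinset, Finsupp.single i (α i))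
          (c * ∏ i ∈ l.toFinset, ((γ i).descFactorial (α i) : ℝ)) := by
  induction l generalizing γ c with
  | nil => simp
  | cons i l ih =>
    have hi : i ∉ l := (List.nodup_cons.1 hl).1
    have hl' : l.Nodup := (List.nodup_cons.1 hl).2
    have hits : i ∉ l.toFinset := by simpa using hi
    rw [List.foldl_cons, pderiv_iterate_monomial, ih hl']
    rw [List.toFinset_cons, Finset.sum_insert hits, Finset.prod_insert hits]
    congr 1
    · rw [tsub_tsub]
    · rw [← mul_assoc]
      congr 1
      apply Finset.prod_congr rfl
      intro j hj
      have hji : j ≠ i := fun h => hits (h ▸ hj)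
      rw [Finsupp.tsub_apply, Finsupp.single_apply, if_neg (fun h => hji h.symm),
        Nat.sub_zero]

lemma mderiv_monomial (α : Fin n → ℕ) (γ : Fin n →₀ ℕ) (c : ℝ) :
    mderiv α (monomial γ c)
      = monomial (γ - toF α) (c * ∏ i, ((γ i).descFactorial (α i) : ℝ)) := by
  have h := foldl_monomial α (List.finRange n) (List.nodup_finRange n) γ c
  rw [mderiv, h]
  congr 1 <;> rw [List.toFinset_finRange]
  rfl


lemma mderiv_mderiv (α β : Fin n → ℕ) (P : MvPolynomial (Fin n) ℝ) :
    mderiv β (mderiv α P) = mderiv (fun i => α i + β i) P := by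
  conv_lhs => rw [P.as_sum]
  conv_rhs => rw [P.as_sum]
  rw [mderiv_sum, mderiv_sum, mderiv_sum]
  apply Finset.sum_congr rfl
  intro γ _
  rw [mderiv_monomial, mderiv_monomial, mderiv_monomial]
  congr 1
  · rw [tsub_tsub, toF_add]
  · rw [mul_assoc, ← Finset.prod_mul_distrib]
    congr 1
    apply Finset.prod_congr rfl
    intro j _
    rw [Finsupp.tsub_apply, toF_apply]
    have h := Nat.descFactorial_mul_descFactorial (k := α j) (m := α j + β j)
      (n := γ j) (Nat.le_add_right _ _)
    rw [Nat.add_sub_cancel_left] at h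
    show ((γ j).descFactorial (α j) : ℝ) * ((γ j - α j).descFactorial (β j) : ℝ)
      = (((γ j).descFactorial (α j + β j) : ℕ) : ℝ)
    rw [← h]
    push_cast
    ring

lemma totalDegree_mderiv_le (α : Fin n → ℕ) (P : MvPolynomial (Fin n) ℝ) :
    (mderiv α P).totalDegree ≤ P.totalDegree := by
  conv_lhs => rw [P.as_sum]
  rw [mderiv_sum]
  apply le_trans (totalDegree_finset_sum _ _)
  apply Finset.sup_le
  intro γ hγ
  rw [mderiv_monomial]
  apply le_trans (totalDegree_monomial_le _ _)
  apply le_trans _ (le_totalDegree hγ)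
  rw [Finsupp.sum_fintype _ _ (fun _ => rfl), Finsupp.sum_fintype _ _ (fun _ => rfl)]
  apply Finset.sum_le_sum
  intro j _
  rw [Finsupp.tsub_apply]
  exact Nat.sub_le _ _

lemma mderiv_eq_zero_of_totalDegree_lt (α : Fin n → ℕ) (P : MvPolynomial (Fin n) ℝ)
    (h : P.totalDegree < ∑ i, α i) : mderiv α P = 0 := by
  conv_lhs => rw [P.as_sum]
  rw [mderiv_sum]
  apply Finset.sum_eq_zero
  intro γ hγ
  rw [mderiv_monomial]
  have hsum : ∑ i, γ i < ∑ i, α i := by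
    calc ∑ i, γ i = γ.sum fun _ e => e := by
          rw [Finsupp.sum_fintype _ _ (fun _ => rfl)]
    _ ≤ P.totalDegree := le_totalDegree hγ
    _ < ∑ i, α i := h
  obtain ⟨j, hj⟩ : ∃ j, γ j < α j := by
    by_contra hc
    push_neg at hc
    exact absurd (Finset.sum_le_sum fun i (_ : i ∈ Finset.univ) => hc i) (not_le.2 hsum)
  have hz : ((γ j).descFactorial (α j) : ℝ) = 0 := by
    rw [Nat.descFactorial_eq_zero_iff_lt.2 hj, Nat.cast_zero]
  rw [Finset.prod_eq_zero (Finset.mem_univ j) hz, mul_zero, map_zero]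


lemma eval_monomial' (y : Fin n → ℝ) (γ : Fin n →₀ ℕ) (c : ℝ) :
    eval y (monomial γ c) = c * ∏ i, y i ^ γ i := by
  rw [eval_monomial]
  congr 1
  rw [Finsupp.prod_fintype]
  intro i
  exact pow_zero _

lemma taylor_monomial (d : ℕ) (x y : Fin n → ℝ) (γ : Fin n →₀ ℕ) (c : ℝ)
    (hγ : (∑ j, γ j) ≤ d) :
    eval x (monomial γ c) = ∑ β ∈ multiIndices n d,
      eval y (mderiv β (monomial γ c)) * (∏ i, (x i - y i) ^ β i)
        / (∏ i, ((β i).factorial : ℝ)) := by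
  have key : ∀ β : Fin n → ℕ,
      eval y (mderiv β (monomial γ c)) * (∏ i, (x i - y i) ^ β i)
        / (∏ i, ((β i).factorial : ℝ))
      = c * ∏ i, (((γ i).descFactorial (β i) : ℝ) * y i ^ (γ i - β i)
          * (x i - y i) ^ β i / ((β i).factorial : ℝ)) := by
    intro β
    rw [mderiv_monomial, eval_monomial']
    rw [Finset.prod_div_distrib]
    rw [Finset.prod_mul_distrib, Finset.prod_mul_distrib]
    have : ∀ i : Fin n, y i ^ ((γ - toF β) i) = y i ^ (γ i - β i) := by
      intro i; rw [Finsupp.tsub_apply, toF_apply]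
    rw [Finset.prod_congr rfl fun i _ => this i]
    field_simp
  rw [Finset.sum_congr rfl fun β _ => key β]
  -- restrict to the box
  set B := Fintype.piFinset (fun i : Fin n => Finset.range (γ i + 1)) with hB
  have hBsub : B ⊆ multiIndices n d := by
    intro β hβ
    rw [Fintype.mem_piFinset] at hβ
    have hle : ∀ i, β i ≤ γ i := fun i => Nat.lt_succ_iff.1 (Finset.mem_range.1 (hβ i))
    exact mem_multiIndices_of_sum_le (le_trans (Finset.sum_le_sum fun i _ => hle i) hγ)
  have hvanish : ∀ β ∈ multiIndices n d, β ∉ B →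
      c * ∏ i, (((γ i).descFactorial (β i) : ℝ) * y i ^ (γ i - β i)
        * (x i - y i) ^ β i / ((β i).factorial : ℝ)) = 0 := by
    intro β _ hβ
    rw [hB, Fintype.mem_piFinset] at hβ
    push_neg at hβ
    obtain ⟨j, hj⟩ := hβ
    rw [Finset.mem_range, not_lt] at hj
    have hz : ((γ j).descFactorial (β j) : ℝ) = 0 := by
      rw [Nat.descFactorial_eq_zero_iff_lt.2 hj, Nat.cast_zero]
    rw [Finset.prod_eq_zero (Finset.mem_univ j) (by rw [hz]; ring), mul_zero]
  rw [← Finset.sum_subset hBsub hvanish]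
  rw [← Finset.mul_sum]
  rw [hB, ← Finset.prod_univ_sum (fun i : Fin n => Finset.range (γ i + 1))
    (fun i b => ((γ i).descFactorial b : ℝ) * y i ^ (γ i - b) * (x i - y i) ^ b
      / (b.factorial : ℝ))]
  rw [eval_monomial']
  congr 1
  apply Finset.prod_congr rfl
  intro i _
  -- single variable binomial identity
  have hbin : ∀ b ∈ Finset.range (γ i + 1),
      ((γ i).descFactorial b : ℝ) * y i ^ (γ i - b) * (x i - y i) ^ b / (b.factorial : ℝ)
      = (x i - y i) ^ b * y i ^ (γ i - b) * ((γ i).choose b : ℝ) := by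
    intro b _
    rw [Nat.descFactorial_eq_factorial_mul_choose]
    push_cast
    have hb : (b.factorial : ℝ) ≠ 0 := by positivity
    field_simp
  rw [Finset.sum_congr rfl hbin, ← add_pow]
  ring_nf

lemma taylor (Q : MvPolynomial (Fin n) ℝ) (d : ℕ) (hd : Q.totalDegree ≤ d)
    (x y : Fin n → ℝ) :
    eval x Q = ∑ β ∈ multiIndices n d,
      eval y (mderiv β Q) * (∏ i, (x i - y i) ^ β i)
        / (∏ i, ((β i).factorial : ℝ)) := by
  conv_lhs => rw [Q.as_sum]
  rw [map_sum]
  have : ∀ β ∈ multiIndices n d,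
      eval y (mderiv β Q) * (∏ i, (x i - y i) ^ β i) / (∏ i, ((β i).factorial : ℝ))
      = ∑ γ ∈ Q.support, eval y (mderiv β (monomial γ (coeff γ Q)))
          * (∏ i, (x i - y i) ^ β i) / (∏ i, ((β i).factorial : ℝ)) := by
    intro β _
    conv_lhs => rw [Q.as_sum]
    rw [mderiv_sum, map_sum, Finset.sum_mul, Finset.sum_div]
  rw [Finset.sum_congr rfl this, Finset.sum_comm]
  apply Finset.sum_congr rfl
  intro γ hγ
  apply taylor_monomial
  calc (∑ j, γ j) = γ.sum fun _ e => e := by rw [Finsupp.sum_fintype _ _ (fun _ => rfl)]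
  _ ≤ Q.totalDegree := le_totalDegree hγ
  _ ≤ d := hd

section Omega

variable {ω : ℝ → ℝ}
variable (hnn : ∀ t, 0 ≤ t → 0 ≤ ω t)
variable (hcont : ContinuousOn ω (Set.Ici 0))
variable (hmono : StrictMonoOn ω (Set.Ici 0))
variable (hconc : ConcaveOn ℝ (Set.Ici 0) ω)
variable (h0 : ω 0 = 0)

include hconc h0 in
lemma omega_smul_le {l x : ℝ} (hl : 0 ≤ l) (hl1 : l ≤ 1) (hx : 0 ≤ x) :
    l * ω x ≤ ω (l * x) := by
  have h := hconc.2 (Set.mem_Ici.2 hx) (Set.mem_Ici.2 (le_refl (0:ℝ))) hl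
    (by linarith : (0:ℝ) ≤ 1 - l) (by ring)
  simpa [h0] using h

include hconc h0 in
lemma omega_scale_up {l x : ℝ} (hl : 1 ≤ l) (hx : 0 ≤ x) :
    ω (l * x) ≤ l * ω x := by
  have hlpos : 0 < l := lt_of_lt_of_le one_pos hl
  have h := omega_smul_le hconc h0 (le_of_lt (inv_pos.2 hlpos))
    (inv_le_one_of_one_le₀ hl) (by positivity : (0:ℝ) ≤ l * x)
  rw [inv_mul_cancel_left₀ (ne_of_gt hlpos)] at h
  calc ω (l * x) = l * (l⁻¹ * ω (l * x)) := by field_simp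
  _ ≤ l * ω x := by
      apply mul_le_mul_of_nonneg_left h (le_of_lt hlpos)

include hnn hconc h0 in
lemma omega_subadd {a b : ℝ} (ha : 0 ≤ a) (hb : 0 ≤ b) :
    ω (a + b) ≤ ω a + ω b := by
  rcases eq_or_lt_of_le (by positivity : (0:ℝ) ≤ a + b) with h | h
  · rw [← h, h0]
    have := hnn a ha
    have := hnn b hb
    linarith
  · have h1 : (a / (a+b)) * ω (a+b) ≤ ω a := by
      have := omega_smul_le hconc h0 (by positivity : (0:ℝ) ≤ a/(a+b))
        (by rw [div_le_one h]; linarith) (le_of_lt h)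
      rwa [div_mul_cancel₀ _ (ne_of_gt h)] at this
    have h2 : (b / (a+b)) * ω (a+b) ≤ ω b := by
      have := omega_smul_le hconc h0 (by positivity : (0:ℝ) ≤ b/(a+b))
        (by rw [div_le_one h]; linarith) (le_of_lt h)
      rwa [div_mul_cancel₀ _ (ne_of_gt h)] at this
    have h3 : (a / (a+b)) * ω (a+b) + (b / (a+b)) * ω (a+b) = ω (a+b) := by
      field_simp
    linarith

include hnn hconc h0 in
lemma omega_sum_le {m : ℕ} {t : ℕ → ℝ} (ht : ∀ i < m, 0 ≤ t i) :
    ω (∑ i ∈ Finset.range m, t i) ≤ ∑ i ∈ Finset.range m, ω (t i) := by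
  induction m with
  | zero => simp [h0]
  | succ m ih =>
    rw [Finset.sum_range_succ, Finset.sum_range_succ]
    have hsnn : 0 ≤ ∑ i ∈ Finset.range m, t i :=
      Finset.sum_nonneg fun i hi => ht i (lt_of_lt_of_le (Finset.mem_range.1 hi)
        (Nat.le_succ m))
    calc ω ((∑ i ∈ Finset.range m, t i) + t m)
        ≤ ω (∑ i ∈ Finset.range m, t i) + ω (t m) :=
          omega_subadd hnn hconc h0 hsnn (ht m (Nat.lt_succ_self m))
    _ ≤ (∑ i ∈ Finset.range m, ω (t i)) + ω (t m) := by
          have := ih (fun i hi => ht i (lt_of_lt_of_le hi (Nat.le_succ m)))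
          linarith

include hnn hmono h0 in
lemma g_strictMono {m : ℕ} (hm : 1 ≤ m) :
    StrictMonoOn (fun s => s ^ m * ω s) (Set.Ici (0:ℝ)) := by
  intro a ha b hb hab
  simp only
  rcases eq_or_lt_of_le (Set.mem_Ici.1 ha) with h | h
  · rw [← h, h0]
    have hb' : 0 < b := lt_of_le_of_lt (le_of_eq h) hab
    have hωb : 0 < ω b := by
      have := hmono (Set.mem_Ici.2 (le_refl (0:ℝ))) hb hb'
      rwa [h0] at this
    have hbm : 0 < b ^ m := pow_pos hb' m
    simp only [zero_pow (by omega : m ≠ 0), zero_mul]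
    positivity
  · apply mul_lt_mul' (le_of_lt (pow_lt_pow_left₀ hab (le_of_lt h) (by omega)))
      (hmono ha hb hab) (hnn a (le_of_lt h)) (pow_pos (lt_trans h hab) m)

include hcont hmono h0 in
lemma g_surj {m : ℕ} (hm : 1 ≤ m) {t : ℝ} (ht : 0 ≤ t) :
    ∃ s, 0 ≤ s ∧ s ^ m * ω s = t := by
  have hω1 : 0 < ω 1 := by
    have := hmono (Set.mem_Ici.2 (le_refl (0:ℝ))) (Set.mem_Ici.2 zero_le_one) one_pos
    rwa [h0] at this
  set S : ℝ := max 1 (t / ω 1) with hS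
  have hS1 : 1 ≤ S := le_max_left _ _
  have hS0 : (0:ℝ) ≤ S := by linarith
  have hgS : t ≤ S ^ m * ω S := by
    have h1 : t / ω 1 ≤ S := le_max_right _ _
    have h2 : t ≤ S * ω 1 := by
      rw [div_le_iff₀ hω1] at h1
      linarith
    have h3 : S * ω 1 ≤ S ^ m * ω S := by
      apply mul_le_mul
      · calc S = S ^ 1 := (pow_one S).symm
        _ ≤ S ^ m := pow_le_pow_right₀ hS1 hm
      · exact hmono.monotoneOn (Set.mem_Ici.2 zero_le_one) (Set.mem_Ici.2 hS0) hS1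
      · exact le_of_lt hω1
      · positivity
    linarith
  have hgcont : ContinuousOn (fun s => s ^ m * ω s) (Set.Icc 0 S) := by
    apply ContinuousOn.mul
    · exact (continuous_pow m).continuousOn
    · exact hcont.mono (fun x hx => hx.1)
  have hiv := intermediate_value_Icc hS0 hgcont
  have hmem : t ∈ Set.Icc ((fun s => s ^ m * ω s) 0) ((fun s => s ^ m * ω s) S) := by
    constructor
    · simp only [zero_pow (by omega : m ≠ 0), zero_mul]
      exact ht
    · exact hgS
  obtain ⟨s, hs, hgs⟩ := hiv hmem
  exact ⟨s, hs.1, hgs⟩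

include hnn hcont hmono h0 in
lemma psiInv_spec {m : ℕ} (hm : 1 ≤ m) {t : ℝ} (ht : 0 ≤ t) :
    0 ≤ psiInv ω m t ∧ (psiInv ω m t) ^ m * ω (psiInv ω m t) = t := by
  obtain ⟨s, hs0, hgs⟩ := g_surj hcont hmono h0 hm ht
  have hex : ∃ a ∈ Set.Ici (0:ℝ), (fun s => s ^ m * ω s) a = t := ⟨s, hs0, hgs⟩
  exact ⟨Function.invFunOn_mem hex, Function.invFunOn_eq hex⟩

include hnn hcont hmono h0 in
lemma psiInv_le {m : ℕ} (hm : 1 ≤ m) {t σ : ℝ} (ht : 0 ≤ t) (hσ : 0 ≤ σ)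
    (h : t ≤ σ ^ m * ω σ) : psiInv ω m t ≤ σ := by
  obtain ⟨hψ0, hψ⟩ := psiInv_spec hnn hcont hmono h0 hm ht
  by_contra hc
  push_neg at hc
  have hlt := g_strictMono hnn hmono h0 hm (Set.mem_Ici.2 hσ) (Set.mem_Ici.2 hψ0) hc
  simp only at hlt
  rw [hψ] at hlt
  linarith

include hnn hcont hmono hconc h0 in
lemma phiOm_le {k a : ℕ} (hk : 1 ≤ k) (hak : a ≤ k) {C s A t : ℝ}
    (hC : 1 ≤ C) (hs : 0 ≤ s) (hA : 0 ≤ A) (hωs : ω s ≤ A) (ht : 0 ≤ t)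
    (hbound : t ≤ C * s ^ (k - a) * A) : phiOm ω k a t ≤ C * A := by
  rcases eq_or_lt_of_le hak with rfl | hlt
  · rw [phiOm, if_neg (lt_irrefl a)]
    calc t ≤ C * s ^ (a - a) * A := hbound
    _ = C * A := by rw [Nat.sub_self, pow_zero, mul_one]
  · rw [phiOm, if_pos hlt]
    set m := k - a with hm
    have hm1 : 1 ≤ m := by omega
    by_cases hex : ∃ σ, 0 ≤ σ ∧ A ≤ ω σ
    · obtain ⟨σ, hσ0, hσA⟩ := hex
      have hA_mem : A ∈ Set.Icc (ω 0) (ω σ) := ⟨by rw [h0]; exact hA, hσA⟩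
      obtain ⟨σ₀, hσ₀mem, hσ₀⟩ := intermediate_value_Icc hσ0
        (hcont.mono (fun x hx => hx.1)) hA_mem
      have hσ₀0 : 0 ≤ σ₀ := hσ₀mem.1
      have hsσ₀ : s ≤ σ₀ := by
        by_contra hc
        push_neg at hc
        have := hmono (Set.mem_Ici.2 hσ₀0) (Set.mem_Ici.2 hs) hc
        rw [hσ₀] at this
        linarith
      have hψle : psiInv ω m t ≤ C * σ₀ := by
        apply psiInv_le hnn hcont hmono h0 hm1 ht (by positivity)
        calc t ≤ C * s ^ m * A := hbound
        _ ≤ C * σ₀ ^ m * A := by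
            apply mul_le_mul_of_nonneg_right _ hA
            exact mul_le_mul_of_nonneg_left (pow_le_pow_left₀ hs hsσ₀ m) (by linarith)
        _ = C * σ₀ ^ m * ω σ₀ := by rw [hσ₀]
        _ ≤ C ^ m * σ₀ ^ m * ω (C * σ₀) := by
            apply mul_le_mul
            · apply mul_le_mul_of_nonneg_right _ (by positivity)
              calc C = C ^ 1 := (pow_one C).symm
              _ ≤ C ^ m := pow_le_pow_right₀ hC hm1
            · apply hmono.monotoneOn (Set.mem_Ici.2 hσ₀0)
                (Set.mem_Ici.2 (by positivity))
              calc σ₀ = 1 * σ₀ := (one_mul σ₀).symm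
              _ ≤ C * σ₀ := mul_le_mul_of_nonneg_right hC hσ₀0
            · exact hnn σ₀ hσ₀0
            · positivity
        _ = (C * σ₀) ^ m * ω (C * σ₀) := by rw [mul_pow]
      calc ω (psiInv ω m t) ≤ ω (C * σ₀) := by
            apply hmono.monotoneOn _ (Set.mem_Ici.2 (by positivity)) hψle
            exact Set.mem_Ici.2 (psiInv_spec hnn hcont hmono h0 hm1 ht).1
      _ ≤ C * ω σ₀ := omega_scale_up hconc h0 hC hσ₀0
      _ = C * A := by rw [hσ₀]
    · push_neg at hex
      have hψ0 : 0 ≤ psiInv ω m t := (psiInv_spec hnn hcont hmono h0 hm1 ht).1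
      have hlt2 := hex (psiInv ω m t) hψ0
      calc ω (psiInv ω m t) ≤ A := le_of_lt hlt2
      _ ≤ C * A := le_mul_of_one_le_left hA hC

include hnn hcont hmono h0 in
lemma phiOm_zero {k a : ℕ} (hak : a ≤ k) : phiOm ω k a 0 = 0 := by
  rw [phiOm]
  split
  · rename_i h
    have hm1 : 1 ≤ k - a := by omega
    have h1 : psiInv ω (k - a) 0 ≤ 0 := by
      apply psiInv_le hnn hcont hmono h0 hm1 (le_refl (0:ℝ)) (le_refl (0:ℝ))
      rw [zero_pow (by omega : k - a ≠ 0), zero_mul]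
    have h2 : 0 ≤ psiInv ω (k - a) 0 :=
      (psiInv_spec hnn hcont hmono h0 hm1 (le_refl (0:ℝ))).1
    rw [le_antisymm h1 h2, h0]
  · rfl

end Omega

lemma factorial_sum_le (n k : ℕ) :
    ∑ β ∈ multiIndices n k, (∏ i, ((β i).factorial : ℝ))⁻¹ ≤ Real.exp n := by
  have h1 : ∑ β ∈ multiIndices n k, (∏ i, ((β i).factorial : ℝ))⁻¹
      ≤ ∑ β ∈ Fintype.piFinset (fun _ : Fin n => Finset.range (k + 1)),
          (∏ i, ((β i).factorial : ℝ))⁻¹ := by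
    apply Finset.sum_le_sum_of_subset_of_nonneg
    · exact Finset.filter_subset _ _
    · intro β _ _
      positivity
  have h2 : ∑ β ∈ Fintype.piFinset (fun _ : Fin n => Finset.range (k + 1)),
      (∏ i, ((β i).factorial : ℝ))⁻¹
      = ∏ _i : Fin n, ∑ b ∈ Finset.range (k + 1), ((b.factorial : ℝ))⁻¹ := by
    rw [Finset.prod_univ_sum (fun _ : Fin n => Finset.range (k + 1))
      (fun _ b => ((b.factorial : ℝ))⁻¹)]
    apply Finset.sum_congr rfl
    intro β _
    rw [← Finset.prod_inv_distrib]
  have h3 : ∑ b ∈ Finset.range (k + 1), ((b.factorial : ℝ))⁻¹ ≤ Real.exp 1 := by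
    have h := Real.sum_le_exp_of_nonneg (zero_le_one) (k + 1)
    calc ∑ b ∈ Finset.range (k + 1), ((b.factorial : ℝ))⁻¹
        = ∑ b ∈ Finset.range (k + 1), (1:ℝ) ^ b / (b.factorial : ℝ) := by
          apply Finset.sum_congr rfl
          intro b _
          rw [one_pow, one_div]
    _ ≤ Real.exp 1 := h
  calc ∑ β ∈ multiIndices n k, (∏ i, ((β i).factorial : ℝ))⁻¹
      ≤ ∏ _i : Fin n, ∑ b ∈ Finset.range (k + 1), ((b.factorial : ℝ))⁻¹ := by
        rw [← h2]; exact h1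
  _ ≤ ∏ _i : Fin n, Real.exp 1 := by
      apply Finset.prod_le_prod
      · intro i _
        positivity
      · intro i _
        exact h3
  _ = Real.exp n := by
      rw [Finset.prod_const, Finset.card_univ, Fintype.card_fin, ← Real.exp_nat_mul,
        mul_one]

section Core

variable {ω : ℝ → ℝ}
variable (hnn : ∀ t, 0 ≤ t → 0 ≤ ω t)
variable (hcont : ContinuousOn ω (Set.Ici 0))
variable (hmono : StrictMonoOn ω (Set.Ici 0))
variable (hconc : ConcaveOn ℝ (Set.Ici 0) ω)
variable (h0 : ω 0 = 0)

include hnn hcont hmono hconc h0 in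
lemma core {k : ℕ} (hk : 1 ≤ k) {s A : ℝ} (hs : 0 ≤ s) (hA : 0 ≤ A)
    (hωs : ω s ≤ A) (m : ℕ) (Q : ℕ → MvPolynomial (Fin n) ℝ) (d : ℕ → ℝ)
    (y : ℕ → (Fin n → ℝ)) (x : Fin n → ℝ)
    (hdeg : ∀ i < m, (Q i).totalDegree ≤ k)
    (hdnn : ∀ i < m, 0 ≤ d i)
    (hsum : (∑ i ∈ Finset.range m, d i) ≤ A)
    (hy : ∀ i < m, ∀ j, |x j - y i j| ≤ s)
    (hD : ∀ i < m, ∀ γ ∈ multiIndices n k,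
      |eval (y i) (mderiv γ (Q i))| ≤ s ^ (k - ∑ j, γ j) * d i) :
    ∀ α ∈ multiIndices n k,
      phiOm ω k (∑ j, α j) |eval x (mderiv α (∑ i ∈ Finset.range m, Q i))|
        ≤ Real.exp n * A := by
  intro α hα
  set a := ∑ j, α j with ha
  have hak : a ≤ k := (mem_multiIndices.1 hα).2
  -- main estimate
  have hmain : |eval x (mderiv α (∑ i ∈ Finset.range m, Q i))|
      ≤ Real.exp n * s ^ (k - a) * A := by
    rw [mderiv_sum, map_sum]
    calc |∑ i ∈ Finset.range m, eval x (mderiv α (Q i))|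
        ≤ ∑ i ∈ Finset.range m, |eval x (mderiv α (Q i))| :=
          Finset.abs_sum_le_sum_abs _ _
    _ ≤ ∑ i ∈ Finset.range m, Real.exp n * s ^ (k - a) * d i := by
        apply Finset.sum_le_sum
        intro i hi
        have him : i < m := Finset.mem_range.1 hi
        -- Taylor expansion of `mderiv α (Q i)` at `y i`
        have htay := taylor (mderiv α (Q i)) k
          (le_trans (totalDegree_mderiv_le α (Q i)) (hdeg i him)) x (y i)
        rw [htay]
        calc |∑ β ∈ multiIndices n k, eval (y i) (mderiv β (mderiv α (Q i)))
              * (∏ j, (x j - y i j) ^ β j) / (∏ j, ((β j).factorial : ℝ))|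
            ≤ ∑ β ∈ multiIndices n k, |eval (y i) (mderiv β (mderiv α (Q i)))
              * (∏ j, (x j - y i j) ^ β j) / (∏ j, ((β j).factorial : ℝ))| :=
              Finset.abs_sum_le_sum_abs _ _
        _ ≤ ∑ β ∈ multiIndices n k,
              s ^ (k - a) * d i * (∏ j, ((β j).factorial : ℝ))⁻¹ := by
            apply Finset.sum_le_sum
            intro β hβ
            have hfacpos : (0:ℝ) < ∏ j, ((β j).factorial : ℝ) := by
              apply Finset.prod_pos
              intro j _
              exact_mod_cast Nat.factorial_pos _
            rw [abs_div, abs_mul, abs_of_pos hfacpos, div_eq_mul_inv]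
            apply mul_le_mul_of_nonneg_right _ (le_of_lt (inv_pos.2 hfacpos))
            rw [mderiv_mderiv]
            set b := ∑ j, β j with hb
            have hsumab : ∑ j, (α j + β j) = a + b := by
              rw [Finset.sum_add_distrib]
            by_cases hcase : a + b ≤ k
            · have hmem : (fun j => α j + β j) ∈ multiIndices n k :=
                mem_multiIndices_of_sum_le (by rw [hsumab]; exact hcase)
              have h1 := hD i him _ hmem
              rw [hsumab] at h1
              have h2 : |∏ j, (x j - y i j) ^ β j| ≤ s ^ b := by
                rw [Finset.abs_prod]
                calc ∏ j, |(x j - y i j) ^ β j|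
                    ≤ ∏ j, s ^ β j := by
                      apply Finset.prod_le_prod
                      · intro j _
                        positivity
                      · intro j _
                        rw [abs_pow]
                        exact pow_le_pow_left₀ (abs_nonneg _) (hy i him j) _
                _ = s ^ b := by
                      rw [hb, ← Finset.prod_pow_eq_pow_sum]
              calc |eval (y i) (mderiv (fun j => α j + β j) (Q i))|
                    * |∏ j, (x j - y i j) ^ β j|
                  ≤ (s ^ (k - (a + b)) * d i) * s ^ b := by
                    have hdi := hdnn i him
                    apply mul_le_mul h1 h2 (abs_nonneg _)
                    positivity
              _ = s ^ (k - a) * d i := by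
                    rw [mul_right_comm, ← pow_add]
                    congr 2
                    omega
            · have hz : mderiv (fun j => α j + β j) (Q i) = 0 := by
                apply mderiv_eq_zero_of_totalDegree_lt
                rw [hsumab]
                have := hdeg i him
                omega
              rw [hz, map_zero, abs_zero, zero_mul]
              have hdi := hdnn i him
              positivity
        _ = s ^ (k - a) * d i
              * ∑ β ∈ multiIndices n k, (∏ j, ((β j).factorial : ℝ))⁻¹ := by
            rw [Finset.mul_sum]
        _ ≤ s ^ (k - a) * d i * Real.exp n := by
            apply mul_le_mul_of_nonneg_left (factorial_sum_le n k)
            have := hdnn i him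
            positivity
        _ = Real.exp n * s ^ (k - a) * d i := by ring
    _ = Real.exp n * s ^ (k - a) * ∑ i ∈ Finset.range m, d i := by
        rw [Finset.mul_sum]
    _ ≤ Real.exp n * s ^ (k - a) * A := by
        apply mul_le_mul_of_nonneg_left hsum
        positivity
  have hexp1 : (1:ℝ) ≤ Real.exp n := by
    rw [Real.one_le_exp_iff]
    positivity
  exact phiOm_le hnn hcont hmono hconc h0 hk hak hexp1 hs hA hωs (abs_nonneg _)
    hmain

end Core

lemma abs_coord_le (x y : EuclideanSpace ℝ (Fin n)) (j : Fin n) :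
    |x j - y j| ≤ ‖x - y‖ := by
  have h : x j - y j = (x - y) j := rfl
  rw [h, EuclideanSpace.norm_eq, ← Real.sqrt_sq_eq_abs]
  apply Real.sqrt_le_sqrt
  calc ((x - y) j) ^ 2 = ‖(x - y) j‖ ^ 2 := by rw [Real.norm_eq_abs, sq_abs]
  _ ≤ ∑ i, ‖(x - y) i‖ ^ 2 :=
      Finset.single_le_sum (f := fun i => ‖(x - y) i‖ ^ 2)
        (fun i _ => by positivity) (Finset.mem_univ j)

section Glue

variable {ω : ℝ → ℝ} {k : ℕ}

lemma dOm_ge_omega (T T' : MvPolynomial (Fin n) ℝ × EuclideanSpace ℝ (Fin n)) :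
    ω ‖T.2 - T'.2‖ ≤ dOm ω k T T' := by
  obtain ⟨α₀, hα₀⟩ := multiIndices_nonempty n k
  unfold dOm
  have h := Finset.le_sup' (fun α => max (ω ‖T.2 - T'.2‖)
      (max (phiOm ω k (∑ i, α i) |eval (fun i => T.2 i) (mderiv α (T.1 - T'.1))|)
           (phiOm ω k (∑ i, α i) |eval (fun i => T'.2 i) (mderiv α (T.1 - T'.1))|))) hα₀
  exact le_trans (le_max_left _ _) h

lemma dOm_ge_phi_fst (T T' : MvPolynomial (Fin n) ℝ × EuclideanSpace ℝ (Fin n))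
    {γ : Fin n → ℕ} (hγ : γ ∈ multiIndices n k) :
    phiOm ω k (∑ i, γ i) |eval (fun i => T.2 i) (mderiv γ (T.1 - T'.1))|
      ≤ dOm ω k T T' := by
  unfold dOm
  have h := Finset.le_sup' (fun α => max (ω ‖T.2 - T'.2‖)
      (max (phiOm ω k (∑ i, α i) |eval (fun i => T.2 i) (mderiv α (T.1 - T'.1))|)
           (phiOm ω k (∑ i, α i) |eval (fun i => T'.2 i) (mderiv α (T.1 - T'.1))|))) hγ
  exact le_trans (le_trans (le_max_left _ _) (le_max_right _ _)) h

lemma dOm_nonneg (hnn : ∀ t, 0 ≤ t → 0 ≤ ω t)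
    (T T' : MvPolynomial (Fin n) ℝ × EuclideanSpace ℝ (Fin n)) :
    0 ≤ dOm ω k T T' :=
  le_trans (hnn _ (norm_nonneg _)) (dOm_ge_omega T T')

variable (hnn : ∀ t, 0 ≤ t → 0 ≤ ω t)
variable (hcont : ContinuousOn ω (Set.Ici 0))
variable (hmono : StrictMonoOn ω (Set.Ici 0))
variable (hconc : ConcaveOn ℝ (Set.Ici 0) ω)
variable (h0 : ω 0 = 0)

include hnn hcont hmono hconc h0 in
lemma chain_bound (hk : 1 ≤ k) (m : ℕ)
    (c : ℕ → MvPolynomial (Fin n) ℝ × EuclideanSpace ℝ (Fin n))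
    (hdeg : ∀ i ≤ m, (c i).1.totalDegree ≤ k) :
    ((multiIndices n k).sup' (multiIndices_nonempty n k) fun α =>
      max (ω ‖(c 0).2 - (c m).2‖)
        (phiOm ω k (∑ i, α i)
          |eval (fun i => (c 0).2 i) (mderiv α ((c 0).1 - (c m).1))|))
      ≤ Real.exp n * ∑ i ∈ Finset.range m, dOm ω k (c i) (c (i + 1)) := by
  have hexp1 : (1:ℝ) ≤ Real.exp n := by rw [Real.one_le_exp_iff]; positivity
  set d : ℕ → ℝ := fun i => dOm ω k (c i) (c (i + 1)) with hd_def
  set A := ∑ i ∈ Finset.range m, d i with hA_def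
  have hdnn : ∀ i, 0 ≤ d i := fun i => dOm_nonneg hnn _ _
  have hA : 0 ≤ A := Finset.sum_nonneg fun i _ => hdnn i
  have hdA : ∀ i < m, d i ≤ A := fun i hi =>
    Finset.single_le_sum (fun j _ => hdnn j) (Finset.mem_range.2 hi)
  rcases Nat.eq_zero_or_pos m with rfl | hm
  · apply Finset.sup'_le
    intro α hα
    have hak : (∑ i, α i) ≤ k := (mem_multiIndices.1 hα).2
    have hA0 : A = 0 := by rw [hA_def]; simp
    rw [sub_self, sub_self, norm_zero, h0, mderiv_zero, map_zero, abs_zero,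
      phiOm_zero hnn hcont hmono h0 hak, max_self, hA0, mul_zero]
  · have hmne : (Finset.range m).Nonempty := ⟨0, Finset.mem_range.2 hm⟩
    set Sx := ∑ j ∈ Finset.range m, ‖(c j).2 - (c (j + 1)).2‖ with hSx_def
    have hSxnn : 0 ≤ Sx := Finset.sum_nonneg fun j _ => norm_nonneg _
    have hωSx : ω Sx ≤ A := by
      calc ω Sx ≤ ∑ j ∈ Finset.range m, ω ‖(c j).2 - (c (j + 1)).2‖ :=
            omega_sum_le hnn hconc h0 (fun i _ => norm_nonneg _)
      _ ≤ A := Finset.sum_le_sum fun i _ => dOm_ge_omega _ _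
    set F : ℕ → (Fin n → ℕ) → ℝ := fun i γ =>
      if (∑ j, γ j) < k then
        psiInv ω (k - ∑ j, γ j)
          |eval (fun j => (c i).2 j) (mderiv γ ((c i).1 - (c (i + 1)).1))|
      else 0 with hF_def
    set W := (Finset.range m).sup' hmne
      (fun i => (multiIndices n k).sup' (multiIndices_nonempty n k) (F i)) with hW_def
    set s := max Sx W with hs_def
    have hs : 0 ≤ s := le_trans hSxnn (le_max_left _ _)
    have hωF : ∀ i < m, ∀ γ ∈ multiIndices n k, ω (F i γ) ≤ A := by
      intro i hi γ hγ
      rw [hF_def]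
      simp only
      split
      · rename_i hck
        have hφ := dOm_ge_phi_fst (ω := ω) (c i) (c (i + 1)) hγ
        rw [phiOm, if_pos hck] at hφ
        exact le_trans hφ (hdA i hi)
      · rw [h0]; exact hA
    have hωW : ω W ≤ A := by
      obtain ⟨i, hi, hWi⟩ := Finset.exists_mem_eq_sup' hmne
        (fun i => (multiIndices n k).sup' (multiIndices_nonempty n k) (F i))
      obtain ⟨γ, hγ, hWγ⟩ := Finset.exists_mem_eq_sup' (multiIndices_nonempty n k) (F i)
      rw [hW_def, hWi, hWγ]
      exact hωF i (Finset.mem_range.1 hi) γ hγ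
    have hωs : ω s ≤ A := by
      rcases max_cases Sx W with ⟨he, _⟩ | ⟨he, _⟩ <;> rw [hs_def, he]
      · exact hωSx
      · exact hωW
    have htel : ∀ i ≤ m, ‖(c 0).2 - (c i).2‖ ≤ Sx := by
      have key : ∀ i, ‖(c 0).2 - (c i).2‖
          ≤ ∑ j ∈ Finset.range i, ‖(c j).2 - (c (j + 1)).2‖ := by
        intro i
        induction i with
        | zero => simp
        | succ i ih =>
          rw [Finset.sum_range_succ]
          have heq : (c 0).2 - (c (i + 1)).2
              = ((c 0).2 - (c i).2) + ((c i).2 - (c (i + 1)).2) := by abel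
          calc ‖(c 0).2 - (c (i + 1)).2‖
              ≤ ‖(c 0).2 - (c i).2‖ + ‖(c i).2 - (c (i + 1)).2‖ := by
                rw [heq]; exact norm_add_le _ _
          _ ≤ _ := by linarith
      intro i him
      refine le_trans (key i) ?_
      apply Finset.sum_le_sum_of_subset_of_nonneg (Finset.range_subset_range.2 him)
      intro j _ _
      exact norm_nonneg _
    have hy : ∀ i < m, ∀ j, |(c 0).2 j - (c i).2 j| ≤ s := by
      intro i hi j
      calc |(c 0).2 j - (c i).2 j| ≤ ‖(c 0).2 - (c i).2‖ := abs_coord_le _ _ j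
      _ ≤ Sx := htel i (le_of_lt hi)
      _ ≤ s := le_max_left _ _
    have hD : ∀ i < m, ∀ γ ∈ multiIndices n k,
        |eval (fun j => (c i).2 j) (mderiv γ ((c i).1 - (c (i + 1)).1))|
          ≤ s ^ (k - ∑ j, γ j) * d i := by
      intro i hi γ hγ
      have hφ := dOm_ge_phi_fst (ω := ω) (c i) (c (i + 1)) hγ
      have ht : (0:ℝ) ≤ |eval (fun j => (c i).2 j) (mderiv γ ((c i).1 - (c (i + 1)).1))| :=
        abs_nonneg _
      by_cases hck : (∑ j, γ j) < k
      · have hm1 : 1 ≤ k - ∑ j, γ j := by omega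
        obtain ⟨hψ0, hψ⟩ := psiInv_spec hnn hcont hmono h0 hm1 ht
        have hFle : F i γ ≤ s := by
          calc F i γ ≤ (multiIndices n k).sup' (multiIndices_nonempty n k) (F i) :=
                Finset.le_sup' (F i) hγ
          _ ≤ W := Finset.le_sup'
                (fun i => (multiIndices n k).sup' (multiIndices_nonempty n k) (F i))
                (Finset.mem_range.2 hi)
          _ ≤ s := le_max_right _ _
        have hψle : psiInv ω (k - ∑ j, γ j)
            |eval (fun j => (c i).2 j) (mderiv γ ((c i).1 - (c (i + 1)).1))| ≤ s := by
          rw [hF_def] at hFle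
          simp only [if_pos hck] at hFle
          exact hFle
        have hωψ : ω (psiInv ω (k - ∑ j, γ j)
            |eval (fun j => (c i).2 j) (mderiv γ ((c i).1 - (c (i + 1)).1))|) ≤ d i := by
          rw [phiOm, if_pos hck] at hφ
          exact hφ
        calc |eval (fun j => (c i).2 j) (mderiv γ ((c i).1 - (c (i + 1)).1))|
            = (psiInv ω (k - ∑ j, γ j) _) ^ (k - ∑ j, γ j)
              * ω (psiInv ω (k - ∑ j, γ j) _) := hψ.symm
        _ ≤ s ^ (k - ∑ j, γ j) * d i :=
            mul_le_mul (pow_le_pow_left₀ hψ0 hψle _) hωψ (hnn _ hψ0) (by positivity)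
      · have hck' : (∑ j, γ j) = k := by
          have := (mem_multiIndices.1 hγ).2
          omega
        rw [hck', Nat.sub_self, pow_zero, one_mul]
        rw [phiOm, if_neg (by omega)] at hφ
        exact hφ
    have hcore := core hnn hcont hmono hconc h0 hk hs hA hωs m
      (fun i => (c i).1 - (c (i + 1)).1) d (fun i j => (c i).2 j)
      (fun j => (c 0).2 j)
      (fun i hi => le_trans (totalDegree_sub _ _)
        (max_le (hdeg i (le_of_lt hi)) (hdeg (i + 1) hi)))
      (fun i _ => hdnn i) (le_of_eq rfl) hy hD
    have hsumQ : ∑ i ∈ Finset.range m, ((c i).1 - (c (i + 1)).1)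
        = (c 0).1 - (c m).1 := Finset.sum_range_sub' (fun i => (c i).1) m
    apply Finset.sup'_le
    intro α hα
    apply max_le
    · calc ω ‖(c 0).2 - (c m).2‖ ≤ ω Sx :=
          hmono.monotoneOn (Set.mem_Ici.2 (norm_nonneg _)) (Set.mem_Ici.2 hSxnn)
            (htel m le_rfl)
      _ ≤ A := hωSx
      _ ≤ Real.exp n * A := le_mul_of_one_le_left hA hexp1
    · have hc := hcore α hα
      rw [hsumQ] at hc
      exact hc

include hnn hcont hmono hconc h0 in
lemma dOm_le_expI (hk : 1 ≤ k)
    (T T' : MvPolynomial (Fin n) ℝ × EuclideanSpace ℝ (Fin n))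
    (hT : T.1.totalDegree ≤ k) (hT' : T'.1.totalDegree ≤ k) :
    dOm ω k T T' ≤ Real.exp n *
      ((multiIndices n k).sup' (multiIndices_nonempty n k) fun α =>
        max (ω ‖T.2 - T'.2‖)
          (phiOm ω k (∑ i, α i)
            |eval (fun i => T.2 i) (mderiv α (T.1 - T'.1))|)) := by
  have hexp1 : (1:ℝ) ≤ Real.exp n := by rw [Real.one_le_exp_iff]; positivity
  set I := (multiIndices n k).sup' (multiIndices_nonempty n k) fun α =>
      max (ω ‖T.2 - T'.2‖)
        (phiOm ω k (∑ i, α i)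
          |eval (fun i => T.2 i) (mderiv α (T.1 - T'.1))|) with hI_def
  have hIω : ω ‖T.2 - T'.2‖ ≤ I := by
    obtain ⟨α₀, hα₀⟩ := multiIndices_nonempty n k
    have h := Finset.le_sup' (fun α => max (ω ‖T.2 - T'.2‖)
      (phiOm ω k (∑ i, α i)
        |eval (fun i => T.2 i) (mderiv α (T.1 - T'.1))|)) hα₀
    exact le_trans (le_max_left _ _) h
  have hIφ : ∀ γ ∈ multiIndices n k,
      phiOm ω k (∑ i, γ i) |eval (fun i => T.2 i) (mderiv γ (T.1 - T'.1))| ≤ I := by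
    intro γ hγ
    have h := Finset.le_sup' (fun α => max (ω ‖T.2 - T'.2‖)
      (phiOm ω k (∑ i, α i)
        |eval (fun i => T.2 i) (mderiv α (T.1 - T'.1))|)) hγ
    exact le_trans (le_max_right _ _) h
  have hI0 : 0 ≤ I := le_trans (hnn _ (norm_nonneg _)) hIω
  set G : (Fin n → ℕ) → ℝ := fun γ =>
    if (∑ j, γ j) < k then
      psiInv ω (k - ∑ j, γ j)
        |eval (fun j => T.2 j) (mderiv γ (T.1 - T'.1))|
    else 0 with hG_def
  set W := (multiIndices n k).sup' (multiIndices_nonempty n k) G with hW_def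
  set s := max ‖T.2 - T'.2‖ W with hs_def
  have hs : 0 ≤ s := le_trans (norm_nonneg _) (le_max_left _ _)
  have hωs : ω s ≤ I := by
    rcases max_cases ‖T.2 - T'.2‖ W with ⟨he, _⟩ | ⟨he, _⟩ <;> rw [hs_def, he]
    · exact hIω
    · obtain ⟨γ, hγ, hWγ⟩ := Finset.exists_mem_eq_sup' (multiIndices_nonempty n k) G
      rw [hW_def, hWγ, hG_def]
      simp only
      split
      · rename_i hck
        have hφ := hIφ γ hγ
        rw [phiOm, if_pos hck] at hφ
        exact hφ
      · rw [h0]; exact hI0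
  have hy : ∀ i < 1, ∀ j, |T'.2 j - T.2 j| ≤ s := by
    intro i _ j
    calc |T'.2 j - T.2 j| ≤ ‖T'.2 - T.2‖ := abs_coord_le _ _ j
    _ = ‖T.2 - T'.2‖ := norm_sub_rev _ _
    _ ≤ s := le_max_left _ _
  have hD : ∀ i < 1, ∀ γ ∈ multiIndices n k,
      |eval (fun j => T.2 j) (mderiv γ (T.1 - T'.1))|
        ≤ s ^ (k - ∑ j, γ j) * I := by
    intro i _ γ hγ
    have hφ := hIφ γ hγ
    have ht : (0:ℝ) ≤ |eval (fun j => T.2 j) (mderiv γ (T.1 - T'.1))| := abs_nonneg _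
    by_cases hck : (∑ j, γ j) < k
    · have hm1 : 1 ≤ k - ∑ j, γ j := by omega
      obtain ⟨hψ0, hψ⟩ := psiInv_spec hnn hcont hmono h0 hm1 ht
      have hGle : G γ ≤ s := by
        calc G γ ≤ W := Finset.le_sup' G hγ
        _ ≤ s := le_max_right _ _
      have hψle : psiInv ω (k - ∑ j, γ j)
          |eval (fun j => T.2 j) (mderiv γ (T.1 - T'.1))| ≤ s := by
        rw [hG_def] at hGle
        simp only [if_pos hck] at hGle
        exact hGle
      have hωψ : ω (psiInv ω (k - ∑ j, γ j)
          |eval (fun j => T.2 j) (mderiv γ (T.1 - T'.1))|) ≤ I := by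
        rw [phiOm, if_pos hck] at hφ
        exact hφ
      calc |eval (fun j => T.2 j) (mderiv γ (T.1 - T'.1))|
          = (psiInv ω (k - ∑ j, γ j) _) ^ (k - ∑ j, γ j)
            * ω (psiInv ω (k - ∑ j, γ j) _) := hψ.symm
      _ ≤ s ^ (k - ∑ j, γ j) * I :=
          mul_le_mul (pow_le_pow_left₀ hψ0 hψle _) hωψ (hnn _ hψ0) (by positivity)
    · have hck' : (∑ j, γ j) = k := by
        have := (mem_multiIndices.1 hγ).2
        omega
      rw [hck', Nat.sub_self, pow_zero, one_mul]
      rw [phiOm, if_neg (by omega)] at hφ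
      exact hφ
  have hcore := core hnn hcont hmono hconc h0 hk hs hI0 hωs 1
    (fun _ => T.1 - T'.1) (fun _ => I) (fun _ j => T.2 j) (fun j => T'.2 j)
    (fun i _ => le_trans (totalDegree_sub _ _) (max_le hT hT'))
    (fun i _ => hI0) (le_of_eq (Finset.sum_range_one (f := fun _ => I))) hy hD
  have hsumQ : (∑ i ∈ Finset.range 1, (T.1 - T'.1)) = T.1 - T'.1 :=
    Finset.sum_range_one (f := fun _ => T.1 - T'.1)
  unfold dOm
  apply Finset.sup'_le
  intro α hα
  apply max_le
  · exact le_trans hIω (le_mul_of_one_le_left hI0 hexp1)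
  · apply max_le
    · exact le_trans (hIφ α hα) (le_mul_of_one_le_left hI0 hexp1)
    · have hc := hcore α hα
      rw [hsumQ] at hc
      exact hc

end Glue

end JetAux

/-- Proposition 2.4(ii): with the one-sided quantity
`I := max_{|α|≤k} {ω(‖x−x'‖), φ_α(|D^α(P−P')(x)|)}`, one has
`e^{−n} δ_ω(T,T') ≤ I ≤ eⁿ δ_ω(T,T')`. -/
theorem delOm_one_sided_formula {n k : ℕ} (hk : 1 ≤ k)
    (ω : ℝ → ℝ)
    (hnn : ∀ t, 0 ≤ t → 0 ≤ ω t)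
    (hcont : ContinuousOn ω (Set.Ici 0))
    (hmono : StrictMonoOn ω (Set.Ici 0))
    (hconc : ConcaveOn ℝ (Set.Ici 0) ω)
    (h0 : ω 0 = 0)
    (T T' : MvPolynomial (Fin n) ℝ × EuclideanSpace ℝ (Fin n))
    (hT : T.1.totalDegree ≤ k) (hT' : T'.1.totalDegree ≤ k) :
    Real.exp (-(n : ℝ)) * delOm ω k T T' ≤
        ((multiIndices n k).sup' (multiIndices_nonempty n k) fun α =>
          max (ω ‖T.2 - T'.2‖)
            (phiOm ω k (∑ i, α i)
              |MvPolynomial.eval (fun i => T.2 i) (mderiv α (T.1 - T'.1))|)) ∧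
      ((multiIndices n k).sup' (multiIndices_nonempty n k) fun α =>
          max (ω ‖T.2 - T'.2‖)
            (phiOm ω k (∑ i, α i)
              |MvPolynomial.eval (fun i => T.2 i) (mderiv α (T.1 - T'.1))|)) ≤
        Real.exp n * delOm ω k T T' := by
  classical
  have hepos : (0:ℝ) < Real.exp n := Real.exp_pos _
  set I := (multiIndices n k).sup' (multiIndices_nonempty n k) fun α =>
      max (ω ‖T.2 - T'.2‖)
        (phiOm ω k (∑ i, α i)
          |MvPolynomial.eval (fun i => T.2 i) (mderiv α (T.1 - T'.1))|) with hI_def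
  set S := { r | ∃ (m : ℕ) (c : ℕ → MvPolynomial (Fin n) ℝ × EuclideanSpace ℝ (Fin n)),
    c 0 = T ∧ c m = T' ∧ (∀ i ≤ m, (c i).1.totalDegree ≤ k) ∧
    r = ∑ i ∈ Finset.range m, dOm ω k (c i) (c (i + 1)) } with hS_def
  have hdel : delOm ω k T T' = sInf S := rfl
  -- the one-step chain
  have hmemd : dOm ω k T T' ∈ S := by
    rw [hS_def]
    refine ⟨1, fun i => if i = 0 then T else T', by simp, by simp, ?_, ?_⟩
    · intro i hi
      interval_cases i
      · simpa using hT
      · simpa using hT'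
    · rw [Finset.sum_range_one]
      simp
  have hne : S.Nonempty := ⟨_, hmemd⟩
  have hbdd : BddBelow S := by
    refine ⟨0, fun r hr => ?_⟩
    rw [hS_def] at hr
    obtain ⟨m, c, _, _, _, rfl⟩ := hr
    exact Finset.sum_nonneg fun i _ => JetAux.dOm_nonneg hnn _ _
  have hIle : ∀ r ∈ S, I ≤ Real.exp n * r := by
    intro r hr
    rw [hS_def] at hr
    obtain ⟨m, c, hc0, hcm, hcdeg, rfl⟩ := hr
    have h := JetAux.chain_bound hnn hcont hmono hconc h0 hk m c hcdeg
    rw [hc0, hcm] at h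
    exact h
  constructor
  · -- first inequality
    have h1 : delOm ω k T T' ≤ Real.exp n * I := by
      rw [hdel]
      calc sInf S ≤ dOm ω k T T' := csInf_le hbdd hmemd
      _ ≤ Real.exp n * I :=
          JetAux.dOm_le_expI hnn hcont hmono hconc h0 hk T T' hT hT'
    rw [Real.exp_neg, inv_mul_le_iff₀ hepos]
    exact h1
  · -- second inequality
    have h2 : (Real.exp n)⁻¹ * I ≤ sInf S := by
      apply le_csInf hne
      intro r hr
      rw [inv_mul_le_iff₀ hepos]
      exact hIle r hr
    calc I = Real.exp n * ((Real.exp n)⁻¹ * I) := by field_simp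
    _ ≤ Real.exp n * delOm ω k T T' := by
        rw [hdel]
        exact mul_le_mul_of_nonneg_left h2 (le_of_lt hepos)
end
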